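/- arXiv:1506.06320 — 7 statements merged into one kernel-verified Lean document; each statement's English description precedes it below -/
import Mathlib

section
/- With the setup in the context, define ψ1(x) = x^n − |α| x^{n−2} − Σ_{j=0}^{n−3} |v_j| x^j and ψ2(x) = x^{n+1} − |β| x^{n−1} − |γ| x^{n−2} − Σ_{j=0}^{n−3} |w_j| x^j. Suppose r1 > 0 satisfies ψ1(r1) = 0 and r2 > 0 satisfies ψ2(r2) = 0. Then every zero z of p satisfies |z| ≤ max{r1, r2}. -/
/-!
With `x = z²`, the `2 × 2` matrix polynomial `F(x) = x^m I - ∑_{j<m} x^j A_j` is a block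
linearization of `p` (of `z p` when `ℓ` is odd): it kills `u = (z + a_{n-1}, 1)` whenever
`p(z) = 0`. Conjugating by `S`, the vector `y = S⁻¹u ≠ 0` is killed by
`x^m I - ∑_{j<m} x^j S⁻¹A_jS`, whose top coefficient is triangular. Taking norms in the first row,
and in the second row multiplied by `|z|`, and adding, gives
`ψ₁(|z|) |y₀| + ψ₂(|z|) |y₁| ≤ 0`. A monic real polynomial whose other coefficients are `≤ 0` is
positive beyond its positive root, so `|z| > max r₁ r₂` would force `y = 0`.
-/

open Polynomial Matrix

theorem Finset.sum_range_two_mul {M : Type*} [AddCommMonoid M] (m : ℕ) (f : ℕ → M) :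
    ∑ k ∈ range (2 * m), f k = ∑ j ∈ range m, (f (2 * j) + f (2 * j + 1)) := by
  induction m with
  | zero => simp
  | succ m ih => rw [Nat.mul_succ, sum_range_succ, sum_range_succ, sum_range_succ, ih, add_assoc]

theorem pow_mul_pow_le_pow_mul_pow {r s : ℝ} (hr : 0 ≤ r) (hrs : r ≤ s) {k N : ℕ} (hk : k ≤ N) :
    s ^ k * r ^ N ≤ r ^ k * s ^ N := by
  obtain ⟨d, rfl⟩ := Nat.exists_eq_add_of_le hk
  have hs : 0 ≤ s := hr.trans hrs
  rw [pow_add, pow_add, mul_left_comm]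
  gcongr

section Padding

variable {R : Type*} [CommRing R]

theorem pow_succ_add_sum_eq_mul_of_shift (ℓ : ℕ) (a b : ℕ → R) (ha0 : a 0 = 0)
    (ha : ∀ j, 1 ≤ j → j < ℓ + 1 → a j = b (j - 1)) (z : R) :
    z ^ (ℓ + 1) + ∑ j ∈ Finset.range (ℓ + 1), a j * z ^ j
      = z * (z ^ ℓ + ∑ i ∈ Finset.range ℓ, b i * z ^ i) := by
  rw [Finset.sum_range_succ', ha0, mul_add, Finset.mul_sum, pow_succ]
  simp only [zero_mul, add_zero]
  congr 1
  · ring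
  · refine Finset.sum_congr rfl fun i hi => ?_
    rw [ha (i + 1) (by omega) (by simpa using hi), Nat.add_sub_cancel, pow_succ]
    ring

theorem pow_add_sum_eq_zero_of_padding {ℓ n : ℕ} {a b : ℕ → R} (hn : n = 2 * ((ℓ + 1) / 2))
    (haeven : Even ℓ → ∀ j, j < n → a j = b j)
    (haodd : ¬ Even ℓ → a 0 = 0 ∧ ∀ j, 1 ≤ j → j < n → a j = b (j - 1))
    {z : R} (hz : z ^ ℓ + ∑ i ∈ Finset.range ℓ, b i * z ^ i = 0) :
    z ^ n + ∑ j ∈ Finset.range n, a j * z ^ j = 0 := by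
  by_cases he : Even ℓ
  · obtain rfl : n = ℓ := by obtain ⟨k, rfl⟩ := he; omega
    rw [← hz, Finset.sum_congr rfl fun j hj => by rw [haeven he j (Finset.mem_range.mp hj)]]
  · obtain rfl : n = ℓ + 1 := by obtain ⟨k, rfl⟩ := Nat.not_even_iff_odd.mp he; omega
    obtain ⟨ha0, ha⟩ := haodd he
    rw [pow_succ_add_sum_eq_mul_of_shift ℓ a b ha0 ha, hz, mul_zero]

end Padding

section MatrixPolynomial

variable {R ι : Type*} [Fintype ι] [DecidableEq ι]

def monicMatrixPoly [CommRing R] (C : ℕ → Matrix ι ι R) (m : ℕ) (x : R) : Matrix ι ι R :=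
  x ^ m • 1 - ∑ j ∈ Finset.range m, x ^ j • C j

theorem monicMatrixPoly_mulVec [CommRing R] (C : ℕ → Matrix ι ι R) (m : ℕ) (x : R) (u : ι → R) :
    monicMatrixPoly C m x *ᵥ u = x ^ m • u - ∑ j ∈ Finset.range m, x ^ j • (C j *ᵥ u) := by
  simp only [monicMatrixPoly, sub_mulVec, sum_mulVec, smul_mulVec, one_mulVec]

theorem monicMatrixPoly_conj [Field R] (C : ℕ → Matrix ι ι R) (m : ℕ) (x : R)
    {S : Matrix ι ι R} (hS : IsUnit S) :
    monicMatrixPoly (fun j => S⁻¹ * C j * S) m x = S⁻¹ * monicMatrixPoly C m x * S := by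
  have hdet : IsUnit S.det := (isUnit_iff_isUnit_det S).mp hS
  simp only [monicMatrixPoly, Matrix.mul_sub, Matrix.sub_mul, Matrix.mul_sum, Matrix.sum_mul,
    Matrix.mul_smul, Matrix.smul_mul, Matrix.mul_one, nonsing_inv_mul S hdet]

theorem norm_pow_mul_le_of_monicMatrixPoly_mulVec_eq_zero [NormedField R] (C : ℕ → Matrix ι ι R)
    (m : ℕ) (x : R) (y : ι → R) (h : monicMatrixPoly C m x *ᵥ y = 0) (i : ι) :
    ‖x‖ ^ m * ‖y i‖ ≤ ∑ j ∈ Finset.range m, ‖x‖ ^ j * ∑ l, ‖C j i l‖ * ‖y l‖ := by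
  have hrow : x ^ m * y i = ∑ j ∈ Finset.range m, x ^ j * (C j *ᵥ y) i := by
    rw [monicMatrixPoly_mulVec, sub_eq_zero] at h
    simpa [Finset.sum_apply] using congrFun h i
  calc ‖x‖ ^ m * ‖y i‖ = ‖∑ j ∈ Finset.range m, x ^ j * (C j *ᵥ y) i‖ := by
        rw [← hrow, norm_mul, norm_pow]
    _ ≤ ∑ j ∈ Finset.range m, ‖x‖ ^ j * ‖(C j *ᵥ y) i‖ := by
        simpa only [norm_mul, norm_pow] using
          norm_sum_le (Finset.range m) fun j => x ^ j * (C j *ᵥ y) i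
    _ ≤ _ := by
        gcongr with j
        exact (norm_sum_le _ _).trans_eq (by simp [norm_mul])

end MatrixPolynomial

section BlockCompanion

variable {R : Type*} [CommRing R]

-- With `e, o, d, c = a_{2j}, a_{2j+1}, a_{2j-1}, a_{n-1}` (and `a_{-1} = 0`) this is `A_j`.
def blockCompanion (e o d c : R) : Matrix (Fin 2) (Fin 2) R :=
  !![-e, c * e - d; -o, c * o - e]

theorem blockCompanion_mulVec (e o d c z : R) :
    blockCompanion e o d c *ᵥ ![z + c, 1] = -(e • ![z, 1] + o • ![0, z] + d • ![1, 0]) := by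
  calc _ = ![-e * (z + c) + (c * e - d) * 1, -o * (z + c) + (c * o - e) * 1] :=
        (mulVecᵣ_eq _ _).symm
    _ = _ := by
      simp only [smul_cons, smul_empty, cons_add_cons, empty_add_empty, neg_cons, neg_empty,
        smul_eq_mul, vecCons_inj]
      exact ⟨by ring, by ring, trivial⟩

theorem monicMatrixPoly_blockCompanion_mulVec (a : ℕ → R) (M : ℕ) (z : R) :
    monicMatrixPoly (fun j => blockCompanion (a (2 * j)) (a (2 * j + 1))
        (if j = 0 then 0 else a (2 * j - 1)) (a (2 * M + 1))) (M + 1) (z ^ 2)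
        *ᵥ ![z + a (2 * M + 1), 1]
      = (z ^ (2 * (M + 1)) + ∑ k ∈ Finset.range (2 * (M + 1)), a k * z ^ k) • ![z, 1] := by
  have hq : z ^ (2 * (M + 1)) + ∑ k ∈ Finset.range (2 * (M + 1)), a k * z ^ k
      = (z ^ 2) ^ (M + 1) + ∑ j ∈ Finset.range (M + 1), (z ^ 2) ^ j * a (2 * j)
        + z * ∑ j ∈ Finset.range (M + 1), (z ^ 2) ^ j * a (2 * j + 1) := by
    rw [Finset.sum_range_two_mul, Finset.sum_add_distrib, Finset.mul_sum, pow_mul, add_assoc]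
    congr 2 <;> refine Finset.sum_congr rfl fun j _ => ?_ <;> ring
  have hprev : ∑ j ∈ Finset.range (M + 1), (z ^ 2) ^ j * (if j = 0 then 0 else a (2 * j - 1))
      = z ^ 2 * ∑ j ∈ Finset.range (M + 1), (z ^ 2) ^ j * a (2 * j + 1)
        - a (2 * M + 1) * (z ^ 2) ^ (M + 1) := by
    rw [eq_sub_iff_add_eq, Finset.sum_range_succ', Finset.sum_range_succ _ M, mul_add,
      Finset.mul_sum]
    simp only [show ∀ k, 2 * (k + 1) - 1 = 2 * k + 1 from fun k => by omega, Nat.add_one_ne_zero,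
      if_false, if_true, mul_zero, add_zero]
    congr 1
    · exact Finset.sum_congr rfl fun k _ => by ring
    · ring
  rw [monicMatrixPoly_mulVec]
  simp only [blockCompanion_mulVec, smul_neg, smul_add, smul_smul, Finset.sum_neg_distrib,
    sub_neg_eq_add, Finset.sum_add_distrib, ← Finset.sum_smul, hprev, hq]
  simp only [smul_cons, smul_empty, cons_add_cons, empty_add_empty, smul_eq_mul, vecCons_inj]
  exact ⟨by ring, by ring, trivial⟩

end BlockCompanion

theorem exists_ne_zero_monicMatrixPoly_conj_mulVec_eq_zero {K : Type*} [Field K] {a : ℕ → K}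
    {M : ℕ} {A : ℕ → Matrix (Fin 2) (Fin 2) K}
    (hA : ∀ j ∈ Finset.range (M + 1), A j = blockCompanion (a (2 * j)) (a (2 * j + 1))
      (if j = 0 then 0 else a (2 * j - 1)) (a (2 * M + 1)))
    {S : Matrix (Fin 2) (Fin 2) K} (hS : IsUnit S) {z : K}
    (hz : z ^ (2 * (M + 1)) + ∑ k ∈ Finset.range (2 * (M + 1)), a k * z ^ k = 0) :
    ∃ y ≠ 0, monicMatrixPoly (fun j => S⁻¹ * A j * S) (M + 1) (z ^ 2) *ᵥ y = 0 := by
  have hSS : S * S⁻¹ = 1 := mul_nonsing_inv S ((isUnit_iff_isUnit_det S).mp hS)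
  refine ⟨S⁻¹ *ᵥ ![z + a (2 * M + 1), 1], fun hy => ?_, ?_⟩
  · have hSy := congrArg (S *ᵥ ·) hy
    simp only [mulVec_mulVec, hSS, one_mulVec, mulVec_zero] at hSy
    simpa using congrFun hSy 1
  · rw [monicMatrixPoly_conj _ _ _ hS, mulVec_mulVec, Matrix.mul_assoc, hSS, Matrix.mul_one,
      ← mulVec_mulVec, monicMatrixPoly, Finset.sum_congr rfl fun j hj => by rw [hA j hj],
      ← monicMatrixPoly, monicMatrixPoly_blockCompanion_mulVec, hz, zero_smul, mulVec_zero]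

section Majorant

variable {𝕜 : Type*} [NormedField 𝕜]

-- For the conjugated blocks `S⁻¹A_jS`, `ψ₁ t = t^n - colMajorant _ m 0 t` and
-- `ψ₂ t = t^(n+1) - colMajorant _ m 1 t`.
def colMajorant (C : ℕ → Matrix (Fin 2) (Fin 2) 𝕜) (m : ℕ) (l : Fin 2) (t : ℝ) : ℝ :=
  ∑ j ∈ Finset.range m, ∑ i : Fin 2, ‖C j i l‖ * t ^ (2 * j + i)

theorem colMajorant_eq_sum_range {C : ℕ → Matrix (Fin 2) (Fin 2) 𝕜} {M : ℕ} {l : Fin 2}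
    {c : ℕ → ℝ} (hC : ∀ j < M, ∀ i : Fin 2, ‖C j i l‖ = c (2 * j + i)) (t : ℝ) :
    colMajorant C M l t = ∑ k ∈ Finset.range (2 * M), c k * t ^ k := by
  rw [colMajorant, Finset.sum_range_two_mul]
  refine Finset.sum_congr rfl fun j hj => ?_
  simp [Fin.sum_univ_two, hC j (Finset.mem_range.mp hj)]

theorem sum_pow_mul_norm_le_colMajorant (C : ℕ → Matrix (Fin 2) (Fin 2) 𝕜) (m : ℕ) (z : 𝕜)
    (y : Fin 2 → 𝕜) (h : monicMatrixPoly C m (z ^ 2) *ᵥ y = 0) :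
    ∑ i : Fin 2, ‖z‖ ^ (2 * m + i) * ‖y i‖ ≤ ∑ l : Fin 2, colMajorant C m l ‖z‖ * ‖y l‖ := by
  have hrow := norm_pow_mul_le_of_monicMatrixPoly_mulVec_eq_zero C m (z ^ 2) y h
  calc ∑ i : Fin 2, ‖z‖ ^ (2 * m + i) * ‖y i‖
      = ∑ i : Fin 2, ‖z‖ ^ (i : ℕ) * (‖z ^ 2‖ ^ m * ‖y i‖) := by
        refine Finset.sum_congr rfl fun i _ => ?_
        rw [norm_pow, ← pow_mul]; ring
    _ ≤ ∑ i : Fin 2, ‖z‖ ^ (i : ℕ) *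
          ∑ j ∈ Finset.range m, ‖z ^ 2‖ ^ j * ∑ l, ‖C j i l‖ * ‖y l‖ := by
        gcongr with i; exact hrow i
    _ = ∑ l : Fin 2, colMajorant C m l ‖z‖ * ‖y l‖ := by
        simp only [colMajorant, Fin.sum_univ_two, Finset.mul_sum, Finset.sum_mul,
          ← Finset.sum_add_distrib]
        refine Finset.sum_congr rfl fun j _ => ?_
        simp only [norm_pow, Fin.val_zero, Fin.val_one]
        ring

theorem colMajorant_lt_pow {C : ℕ → Matrix (Fin 2) (Fin 2) 𝕜} {m N : ℕ} {l : Fin 2}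
    (hN : 2 * m ≤ N) {r s : ℝ} (hr : 0 < r) (hrs : r < s) (hroot : colMajorant C m l r = r ^ N) :
    colMajorant C m l s < s ^ N := by
  obtain _ | N := N
  · simp [colMajorant, show m = 0 by omega] at hroot
  have hterm : ∀ j ∈ Finset.range m, ∀ i : Fin 2,
      ‖C j i l‖ * s ^ (2 * j + i) * r ^ N ≤ ‖C j i l‖ * r ^ (2 * j + i) * s ^ N := by
    intro j hj i
    have : 2 * j + i ≤ N := by have := Finset.mem_range.mp hj; omega
    rw [mul_assoc, mul_assoc]
    exact mul_le_mul_of_nonneg_left (pow_mul_pow_le_pow_mul_pow hr.le hrs.le this) (norm_nonneg _)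
  have hs : 0 < s := hr.trans hrs
  refine lt_of_mul_lt_mul_right ?_ (pow_pos hr N).le
  calc colMajorant C m l s * r ^ N ≤ colMajorant C m l r * s ^ N := by
        simp only [colMajorant, Finset.sum_mul]
        exact Finset.sum_le_sum fun j hj => Finset.sum_le_sum fun i _ => hterm j hj i
    _ = r ^ N * s ^ N * r := by rw [hroot]; ring
    _ < r ^ N * s ^ N * s := by gcongr
    _ = s ^ (N + 1) * r ^ N := by ring

theorem eq_zero_of_colMajorant_lt {C : ℕ → Matrix (Fin 2) (Fin 2) 𝕜} {m : ℕ} {z : 𝕜}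
    {y : Fin 2 → 𝕜} (h : monicMatrixPoly C m (z ^ 2) *ᵥ y = 0)
    (hlt : ∀ l : Fin 2, colMajorant C m l ‖z‖ < ‖z‖ ^ (2 * m + l)) : y = 0 := by
  have hgap : ∀ i : Fin 2, 0 < ‖z‖ ^ (2 * m + i) - colMajorant C m i ‖z‖ :=
    fun i => sub_pos.mpr (hlt i)
  have hnonneg : ∀ i ∈ (Finset.univ : Finset (Fin 2)),
      0 ≤ (‖z‖ ^ (2 * m + i) - colMajorant C m i ‖z‖) * ‖y i‖ :=
    fun i _ => mul_nonneg (hgap i).le (norm_nonneg _)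
  have hzero : ∑ i : Fin 2, (‖z‖ ^ (2 * m + i) - colMajorant C m i ‖z‖) * ‖y i‖ = 0 := by
    refine le_antisymm ?_ (Finset.sum_nonneg hnonneg)
    simpa only [sub_mul, Finset.sum_sub_distrib, sub_nonpos] using
      sum_pow_mul_norm_le_colMajorant C m z y h
  funext i
  have hi := (Finset.sum_eq_zero_iff_of_nonneg hnonneg).mp hzero i (Finset.mem_univ i)
  exact norm_eq_zero.mp ((mul_eq_zero.mp hi).resolve_left (hgap i).ne')

theorem colMajorant_succ_zero_of_blocks {C : ℕ → Matrix (Fin 2) (Fin 2) 𝕜} {M : ℕ}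
    {v w : ℕ → 𝕜} {α β γ : 𝕜}
    (hC : ∀ j < M, C j = !![v (2 * j), w (2 * j); v (2 * j + 1), w (2 * j + 1)])
    (hM : C M = !![α, γ; 0, β]) (t : ℝ) :
    colMajorant C (M + 1) 0 t = ‖α‖ * t ^ (2 * M) + ∑ k ∈ Finset.range (2 * M), ‖v k‖ * t ^ k := by
  rw [colMajorant, Finset.sum_range_succ, ← colMajorant,
    colMajorant_eq_sum_range (c := fun k => ‖v k‖)
      (fun j hj i => by fin_cases i <;> simp [hC j hj])]
  simp [hM, Fin.sum_univ_two, add_comm]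

theorem colMajorant_succ_one_of_blocks {C : ℕ → Matrix (Fin 2) (Fin 2) 𝕜} {M : ℕ}
    {v w : ℕ → 𝕜} {α β γ : 𝕜}
    (hC : ∀ j < M, C j = !![v (2 * j), w (2 * j); v (2 * j + 1), w (2 * j + 1)])
    (hM : C M = !![α, γ; 0, β]) (t : ℝ) :
    colMajorant C (M + 1) 1 t = ‖β‖ * t ^ (2 * M + 1) + ‖γ‖ * t ^ (2 * M)
      + ∑ k ∈ Finset.range (2 * M), ‖w k‖ * t ^ k := by
  rw [colMajorant, Finset.sum_range_succ, ← colMajorant,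
    colMajorant_eq_sum_range (c := fun k => ‖w k‖)
      (fun j hj i => by fin_cases i <;> simp [hC j hj])]
  simp only [hM, Fin.sum_univ_two, of_apply, cons_val', cons_val_zero, cons_val_one,
    cons_val_fin_one, Fin.val_zero, Fin.val_one, add_zero]
  ring

end Majorant

theorem cauchy_like_psi
    (ℓ : ℕ) (hℓ : 3 ≤ ℓ) (b : ℕ → ℂ) (p : Polynomial ℂ)
    (hp : p = X ^ ℓ + ∑ i ∈ Finset.range ℓ, C (b i) * X ^ i)
    (m n : ℕ) (hm : m = (ℓ + 1) / 2) (hn : n = 2 * m)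
    (a : ℕ → ℂ)
    (haeven : Even ℓ → ∀ j, j < n → a j = b j)
    (haodd : ¬ Even ℓ → a 0 = 0 ∧ ∀ j, 1 ≤ j → j < n → a j = b (j - 1))
    (A : ℕ → Matrix (Fin 2) (Fin 2) ℂ)
    (hA0 : A 0 = !![-(a 0), a (n - 1) * a 0; -(a 1), a (n - 1) * a 1 - a 0])
    (hA : ∀ j, 1 ≤ j → j ≤ m - 1 →
      A j = !![-(a (2 * j)), a (n - 1) * a (2 * j) - a (2 * j - 1);
               -(a (2 * j + 1)), a (n - 1) * a (2 * j + 1) - a (2 * j)])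
    (S : Matrix (Fin 2) (Fin 2) ℂ) (hS : IsUnit S)
    (α β γ : ℂ)
    (htri : S⁻¹ * A (m - 1) * S = !![α, γ; 0, β])
    (v w : ℕ → ℂ)
    (hvw : ∀ j, j ≤ m - 2 →
      S⁻¹ * A j * S = !![v (2 * j), w (2 * j); v (2 * j + 1), w (2 * j + 1)])
    (ψ1 ψ2 : ℝ → ℝ)
    (hψ1 : ∀ x : ℝ, ψ1 x = x ^ n - ‖α‖ * x ^ (n - 2)
        - ∑ j ∈ Finset.range (n - 2), ‖v j‖ * x ^ j)
    (hψ2 : ∀ x : ℝ, ψ2 x = x ^ (n + 1) - ‖β‖ * x ^ (n - 1) - ‖γ‖ * x ^ (n - 2)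
        - ∑ j ∈ Finset.range (n - 2), ‖w j‖ * x ^ j)
    (r1 r2 : ℝ) (hr1 : 0 < r1) (hr1' : ψ1 r1 = 0) (hr2 : 0 < r2) (hr2' : ψ2 r2 = 0) :
    ∀ z : ℂ, p.eval z = 0 → ‖z‖ ≤ max r1 r2 := by
  intro z hz
  by_contra! hgt
  have hq : z ^ n + ∑ j ∈ Finset.range n, a j * z ^ j = 0 :=
    pow_add_sum_eq_zero_of_padding (by omega) haeven haodd (by simpa [hp, eval_finsetSum] using hz)
  obtain ⟨M, rfl⟩ : ∃ M, m = M + 1 := ⟨m - 1, by omega⟩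
  subst hn
  simp only [Nat.add_sub_cancel, show 2 * (M + 1) - 1 = 2 * M + 1 by omega,
    show 2 * (M + 1) - 2 = 2 * M by omega] at hA0 hA htri hψ1 hψ2
  have hblock : ∀ j ∈ Finset.range (M + 1), A j = blockCompanion (a (2 * j)) (a (2 * j + 1))
      (if j = 0 then 0 else a (2 * j - 1)) (a (2 * M + 1)) := by
    intro j hj
    rcases Nat.eq_zero_or_pos j with rfl | hj0
    · simp [hA0, blockCompanion]
    · simp [hA j hj0 (by simpa [Nat.lt_succ_iff] using hj), blockCompanion, hj0.ne']
  obtain ⟨y, hy, hTy⟩ := exists_ne_zero_monicMatrixPoly_conj_mulVec_eq_zero hblock hS hq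
  have hvw' : ∀ j < M, S⁻¹ * A j * S = !![v (2 * j), w (2 * j); v (2 * j + 1), w (2 * j + 1)] :=
    fun j hj => hvw j (by omega)
  refine hy (eq_zero_of_colMajorant_lt hTy (Fin.forall_fin_two.mpr ⟨?_, ?_⟩)) <;>
    simp only [Fin.val_zero, Fin.val_one, add_zero]
  · refine colMajorant_lt_pow le_rfl hr1 ((le_max_left _ _).trans_lt hgt) ?_
    rw [colMajorant_succ_zero_of_blocks hvw' htri]
    linarith [hψ1 r1]
  · refine colMajorant_lt_pow (by omega) hr2 ((le_max_right _ _).trans_lt hgt) ?_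
    rw [colMajorant_succ_one_of_blocks hvw' htri]
    linarith [hψ2 r2]
end

section
/- With the setup in the context, define φ1(x) = x^m − |α| x^{m−1} − Σ_{k=1}^{m−1} (|v_{n−1−2k}| + |v_{n−2−2k}|) x^{m−1−k} and φ2(x) = x^m − (|β| + |γ|) x^{m−1} − Σ_{k=1}^{m−1} (|w_{n−1−2k}| + |w_{n−2−2k}|) x^{m−1−k}. Suppose s1 > 0 satisfies φ1(s1) = 0 and s2 > 0 satisfies φ2(s2) = 0. Then every zero z of p satisfies |z| ≤ (max{s1, s2})^{1/2}. -/
/-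
Pairing the coefficients of the monic even-degree polynomial q (q = p, or q = z·p when ℓ is
odd) into the 2×2 blocks A_j linearizes q(z) = 0 as the matrix-polynomial eigen-relation
∑_{j<m} (z²)^j A_j x = (z²)^m x with x = (z + a_{n-1}, 1). Conjugating by S makes the leading
block upper triangular. Summing the absolute values of the two coordinates of y = S⁻¹x shows
that T = |z|² satisfies T^m ≤ ∑_j c_j T^j, where c_j is the ℓ¹-norm of one of the two columns
of S⁻¹A_jS; for the first column this says φ₁(T) ≤ 0, for the second φ₂(T) ≤ 0. Since
φᵢ(x)/x^m is increasing on (0, ∞) and vanishes at sᵢ, this forces T ≤ s₁ or T ≤ s₂.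
-/

open Finset Matrix

theorem sum_range_pairs {M : Type*} [AddCommMonoid M] (f : ℕ → M) (m : ℕ) :
    ∑ j ∈ range m, (f (2 * j) + f (2 * j + 1)) = ∑ i ∈ range (2 * m), f i := by
  induction m with
  | zero => simp
  | succ k ih =>
    rw [sum_range_succ, ih, show 2 * (k + 1) = 2 * k + 1 + 1 by ring, sum_range_succ,
      sum_range_succ, add_assoc]

theorem sum_Icc_one_sub_eq_sum_range {M : Type*} [AddCommMonoid M] (f : ℕ → M) (k : ℕ) :
    ∑ i ∈ Icc 1 k, f (k - i) = ∑ j ∈ range k, f j := by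
  rw [← Ico_add_one_right_eq_Icc, sum_Ico_eq_sum_range, Nat.add_sub_cancel,
    ← sum_range_reflect f k]
  refine sum_congr rfl fun i hi => ?_
  rw [mem_range] at hi
  congr 1
  omega

theorem pow_mul_pow_le_pow_mul_pow_s1 {s t : ℝ} (hs : 0 ≤ s) (hst : s ≤ t) {j k : ℕ} (hjk : j ≤ k) :
    t ^ j * s ^ k ≤ s ^ j * t ^ k := by
  obtain ⟨d, rfl⟩ := Nat.exists_eq_add_of_le hjk
  calc t ^ j * s ^ (j + d) = (s ^ j * t ^ j) * s ^ d := by ring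
    _ ≤ (s ^ j * t ^ j) * t ^ d := mul_le_mul_of_nonneg_left (pow_le_pow_left₀ hs hst d)
        (mul_nonneg (pow_nonneg hs j) (pow_nonneg (hs.trans hst) j))
    _ = s ^ j * t ^ (j + d) := by ring

theorem le_of_pow_le_sum_of_root {c : ℕ → ℝ} (hc : ∀ j, 0 ≤ c j) {k : ℕ} {s t : ℝ} (hs : 0 < s)
    (hs_root : s ^ (k + 1) = ∑ j ∈ range (k + 1), c j * s ^ j)
    (ht : t ^ (k + 1) ≤ ∑ j ∈ range (k + 1), c j * t ^ j) : t ≤ s := by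
  by_contra! hst
  have hcompare : (∑ j ∈ range (k + 1), c j * t ^ j) * s ^ k ≤ s ^ (k + 1) * t ^ k := by
    rw [hs_root, sum_mul, sum_mul]
    refine sum_le_sum fun j hj => ?_
    rw [mul_assoc, mul_assoc]
    exact mul_le_mul_of_nonneg_left
      (pow_mul_pow_le_pow_mul_pow_s1 hs.le hst.le (Nat.lt_succ_iff.mp (mem_range.mp hj))) (hc j)
  have hle : t ^ (k + 1) * s ^ k ≤ s ^ (k + 1) * t ^ k :=
    (mul_le_mul_of_nonneg_right ht (pow_nonneg hs.le k)).trans hcompare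
  have hpos : 0 < t ^ k * s ^ k := mul_pos (pow_pos (hs.trans hst) k) (pow_pos hs k)
  rw [pow_succ, pow_succ] at hle
  nlinarith

theorem exists_pow_le_sum_norm_col {𝕜 ι : Type*} [NormedField 𝕜] [Fintype ι]
    {B : ℕ → Matrix ι ι 𝕜} {y : ι → 𝕜} (hy : y ≠ 0) {t : 𝕜} {k : ℕ}
    (h : ∑ j ∈ range k, t ^ j • (B j *ᵥ y) = t ^ k • y) :
    ∃ c, ‖t‖ ^ k ≤ ∑ j ∈ range k, (∑ i, ‖B j i c‖) * ‖t‖ ^ j := by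
  by_contra! hlt
  obtain ⟨c₀, hc₀⟩ : ∃ c, y c ≠ 0 := Function.ne_iff.mp hy
  have hrow (i : ι) :
      ‖t‖ ^ k * ‖y i‖ ≤ ∑ j ∈ range k, ‖t‖ ^ j * ∑ c, ‖B j i c‖ * ‖y c‖ := by
    calc ‖t‖ ^ k * ‖y i‖ = ‖∑ j ∈ range k, t ^ j * (B j *ᵥ y) i‖ := by
          rw [← norm_pow, ← norm_mul, ← smul_eq_mul, ← Pi.smul_apply, ← h]
          simp [Finset.sum_apply]
      _ ≤ ∑ j ∈ range k, ‖t ^ j * (B j *ᵥ y) i‖ := norm_sum_le _ _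
      _ ≤ ∑ j ∈ range k, ‖t‖ ^ j * ∑ c, ‖B j i c‖ * ‖y c‖ := by
          refine sum_le_sum fun j _ => ?_
          rw [norm_mul, norm_pow]
          refine mul_le_mul_of_nonneg_left ?_ (by positivity)
          exact (norm_sum_le _ _).trans (by simp [norm_mul])
  have hcontra :=
    calc ‖t‖ ^ k * ∑ i, ‖y i‖ = ∑ i, ‖t‖ ^ k * ‖y i‖ := by rw [mul_sum]
    _ ≤ ∑ i, ∑ j ∈ range k, ‖t‖ ^ j * ∑ c, ‖B j i c‖ * ‖y c‖ := sum_le_sum fun i _ => hrow i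
    _ = ∑ c, (∑ j ∈ range k, (∑ i, ‖B j i c‖) * ‖t‖ ^ j) * ‖y c‖ := by
        simp only [mul_sum, sum_mul, mul_assoc, mul_left_comm (‖t‖ ^ _)]
        exact sum_comm.trans ((sum_congr rfl fun _ _ => sum_comm).trans sum_comm)
    _ < ∑ c, ‖t‖ ^ k * ‖y c‖ :=
        sum_lt_sum (fun c _ => mul_le_mul_of_nonneg_right (hlt c).le (norm_nonneg _))
          ⟨c₀, mem_univ _, mul_lt_mul_of_pos_right (hlt c₀) (norm_pos_iff.mpr hc₀)⟩
  rw [← mul_sum] at hcontra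
  exact lt_irrefl _ hcontra

theorem sum_smul_conj_mulVec {R n : Type*} [CommRing R] [Fintype n] [DecidableEq n]
    {A : ℕ → Matrix n n R} {S : Matrix n n R} (hS : IsUnit S) {s : Finset ℕ} {c : ℕ → R}
    {d : R} {x : n → R} (h : ∑ j ∈ s, c j • (A j *ᵥ x) = d • x) :
    ∑ j ∈ s, c j • ((S⁻¹ * A j * S) *ᵥ (S⁻¹ *ᵥ x)) = d • (S⁻¹ *ᵥ x) := by
  have hSS : S * S⁻¹ = 1 := mul_nonsing_inv S ((isUnit_iff_isUnit_det S).mp hS)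
  have hconj (j : ℕ) : (S⁻¹ * A j * S) *ᵥ (S⁻¹ *ᵥ x) = S⁻¹ *ᵥ (A j *ᵥ x) := by
    rw [mulVec_mulVec, Matrix.mul_assoc, Matrix.mul_assoc, hSS, Matrix.mul_one, ← mulVec_mulVec]
  calc ∑ j ∈ s, c j • ((S⁻¹ * A j * S) *ᵥ (S⁻¹ *ᵥ x)) = S⁻¹ *ᵥ ∑ j ∈ s, c j • (A j *ᵥ x) := by
        simp only [hconj, mulVec_sum, mulVec_smul]
    _ = d • (S⁻¹ *ᵥ x) := by rw [h, mulVec_smul]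

theorem sum_padded_coeff_mul_pow {R : Type*} [CommRing R] {ℓ n : ℕ}
    (hn : n = 2 * ((ℓ + 1) / 2)) {a b : ℕ → R}
    (haeven : Even ℓ → ∀ j, j < n → a j = b j)
    (haodd : ¬ Even ℓ → a 0 = 0 ∧ ∀ j, 1 ≤ j → j < n → a j = b (j - 1))
    {z : R} (hz : z ^ ℓ + ∑ i ∈ range ℓ, b i * z ^ i = 0) :
    ∑ i ∈ range n, a i * z ^ i = -z ^ n := by
  rw [eq_neg_iff_add_eq_zero, add_comm]
  by_cases he : Even ℓ
  · obtain rfl : n = ℓ := by obtain ⟨k, hk⟩ := he; omega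
    rw [← hz, sum_congr rfl fun i hi => by rw [haeven he i (mem_range.mp hi)]]
  · obtain ⟨ha0, ha⟩ := haodd he
    obtain rfl : n = ℓ + 1 := by have := Nat.odd_iff.mp (Nat.not_even_iff_odd.mp he); omega
    have hshift : ∀ i ∈ range ℓ, a (i + 1) * z ^ (i + 1) = z * (b i * z ^ i) := fun i hi => by
      rw [ha (i + 1) (by omega) (by simpa using hi), Nat.add_sub_cancel]; ring
    calc z ^ (ℓ + 1) + ∑ i ∈ range (ℓ + 1), a i * z ^ i
        = z * (z ^ ℓ + ∑ i ∈ range ℓ, b i * z ^ i) := by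
          rw [sum_range_succ', sum_congr rfl hshift, ← mul_sum, ha0]; ring
      _ = 0 := by rw [hz, mul_zero]

theorem block_mulVec {R : Type*} [CommRing R] (u p q r z : R) :
    !![-p, u * p - q; -r, u * r - p] *ᵥ ![z + u, 1] = ![-(p * z + q), -(r * z + p)] := by
  ext i
  fin_cases i <;> simp [mulVec, dotProduct, Fin.sum_univ_two] <;> ring

theorem sum_pow_smul_mulVec_eq_pow_smul_of_root {R : Type*} [CommRing R] {a : ℕ → R} {m : ℕ}
    (hm : m ≠ 0) {A : ℕ → Matrix (Fin 2) (Fin 2) R}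
    (hA0 : A 0 = !![-(a 0), a (2 * m - 1) * a 0; -(a 1), a (2 * m - 1) * a 1 - a 0])
    (hA : ∀ j, 1 ≤ j → j ≤ m - 1 →
      A j = !![-(a (2 * j)), a (2 * m - 1) * a (2 * j) - a (2 * j - 1);
               -(a (2 * j + 1)), a (2 * m - 1) * a (2 * j + 1) - a (2 * j)])
    {z : R} (hq : ∑ i ∈ range (2 * m), a i * z ^ i = -z ^ (2 * m)) :
    ∑ j ∈ range m, (z ^ 2) ^ j • (A j *ᵥ ![z + a (2 * m - 1), 1]) =
      (z ^ 2) ^ m • ![z + a (2 * m - 1), 1] := by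
  obtain ⟨k, rfl⟩ : ∃ k, m = k + 1 := ⟨m - 1, by omega⟩
  set u := a (2 * (k + 1) - 1) with hu
  set f : ℕ → R := fun i => a i * z ^ i
  have hAx0 : A 0 *ᵥ ![z + u, 1] = ![-(a 0 * z + 0), -(a 1 * z + a 0)] := by
    rw [hA0, ← sub_zero (u * a 0), block_mulVec]
  have hAx (j : ℕ) (hj1 : 1 ≤ j) (hjk : j ≤ k) : A j *ᵥ ![z + u, 1] =
      ![-(a (2 * j) * z + a (2 * j - 1)), -(a (2 * j + 1) * z + a (2 * j))] := by
    rw [hA j hj1 (by omega), block_mulVec]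
  have hrow0 : ∀ j ∈ range k, (z ^ 2) ^ (j + 1) * (A (j + 1) *ᵥ ![z + u, 1]) 0 =
      -z * (f (2 * j + 1) + f (2 * j + 1 + 1)) := by
    intro j hj
    rw [hAx (j + 1) (by omega) (by simpa using hj), show 2 * (j + 1) - 1 = 2 * j + 1 by omega,
      show 2 * (j + 1) = 2 * j + 1 + 1 by ring]
    simp only [cons_val_zero, f]
    ring
  have hrow1 : ∀ j ∈ range (k + 1),
      (z ^ 2) ^ j * (A j *ᵥ ![z + u, 1]) 1 = -(f (2 * j) + f (2 * j + 1)) := by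
    intro j hj
    rcases Nat.eq_zero_or_pos j with rfl | hj0
    · simp only [hAx0, cons_val_one, cons_val_zero, f]
      ring
    · rw [hAx j hj0 (by simpa [Nat.lt_succ_iff] using hj)]
      simp only [cons_val_one, cons_val_zero, f]
      ring
  have hsum0 : (∑ j ∈ range (k + 1), (z ^ 2) ^ j • (A j *ᵥ ![z + u, 1])) 0 =
      ((z ^ 2) ^ (k + 1) • ![z + u, 1]) 0 := by
    -- A 0 lacks the a (2 * j - 1) term of the other blocks, so its summand is split off.
    have hsplit : ∑ i ∈ range (2 * (k + 1)), f i =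
        f 0 + ∑ i ∈ range (2 * k), f (i + 1) + f (2 * k + 1) := by
      rw [show 2 * (k + 1) = 2 * k + 1 + 1 by ring, sum_range_succ, sum_range_succ' f (2 * k),
        add_comm (f 0)]
    simp only [Finset.sum_apply, Pi.smul_apply, smul_eq_mul]
    rw [sum_range_succ', sum_congr rfl hrow0, ← mul_sum, sum_range_pairs (fun i => f (i + 1)) k,
      hAx0]
    rw [hsplit] at hq
    simp only [cons_val_zero, f, hu, show 2 * (k + 1) - 1 = 2 * k + 1 by omega] at hq ⊢
    linear_combination (-z) * hq
  have hsum1 : (∑ j ∈ range (k + 1), (z ^ 2) ^ j • (A j *ᵥ ![z + u, 1])) 1 =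
      ((z ^ 2) ^ (k + 1) • ![z + u, 1]) 1 := by
    simp only [Finset.sum_apply, Pi.smul_apply, smul_eq_mul]
    rw [sum_congr rfl hrow1, sum_neg_distrib, sum_range_pairs, hq]
    simp [pow_mul]
  ext r
  fin_cases r
  exacts [hsum0, hsum1]

theorem pow_succ_eq_sum_of_phi_eq_zero {u : ℕ → ℂ} {k : ℕ} {c : ℕ → ℝ} {e s : ℝ}
    (hc : ∀ j < k, c j = ‖u (2 * j)‖ + ‖u (2 * j + 1)‖) (hck : c k = e)
    (hφ : s ^ (k + 1) - e * s ^ k - ∑ i ∈ Icc 1 k,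
      (‖u (2 * (k + 1) - 1 - 2 * i)‖ + ‖u (2 * (k + 1) - 2 - 2 * i)‖) * s ^ (k - i) = 0) :
    s ^ (k + 1) = ∑ j ∈ range (k + 1), c j * s ^ j := by
  have hreflect : ∑ i ∈ Icc 1 k,
      (‖u (2 * (k + 1) - 1 - 2 * i)‖ + ‖u (2 * (k + 1) - 2 - 2 * i)‖) * s ^ (k - i) =
        ∑ j ∈ range k, c j * s ^ j := by
    rw [← sum_Icc_one_sub_eq_sum_range (fun j => c j * s ^ j)]
    refine sum_congr rfl fun i hi => ?_
    obtain ⟨hi1, hik⟩ := mem_Icc.mp hi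
    rw [hc (k - i) (by omega), add_comm, show 2 * (k + 1) - 1 - 2 * i = 2 * (k - i) + 1 by omega,
      show 2 * (k + 1) - 2 - 2 * i = 2 * (k - i) by omega]
  rw [sum_range_succ, ← hreflect, hck]
  linarith

open Polynomial

theorem cauchy_like_phi_general
    (ℓ : ℕ) (b : ℕ → ℂ) (p : Polynomial ℂ)
    (hp : p = X ^ ℓ + ∑ i ∈ Finset.range ℓ, C (b i) * X ^ i)
    (m n : ℕ) (hm : m = (ℓ + 1) / 2) (hn : n = 2 * m)
    (a : ℕ → ℂ)
    (haeven : Even ℓ → ∀ j, j < n → a j = b j)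
    (haodd : ¬ Even ℓ → a 0 = 0 ∧ ∀ j, 1 ≤ j → j < n → a j = b (j - 1))
    (A : ℕ → Matrix (Fin 2) (Fin 2) ℂ)
    (hA0 : A 0 = !![-(a 0), a (n - 1) * a 0; -(a 1), a (n - 1) * a 1 - a 0])
    (hA : ∀ j, 1 ≤ j → j ≤ m - 1 →
      A j = !![-(a (2 * j)), a (n - 1) * a (2 * j) - a (2 * j - 1);
               -(a (2 * j + 1)), a (n - 1) * a (2 * j + 1) - a (2 * j)])
    (S : Matrix (Fin 2) (Fin 2) ℂ) (hS : IsUnit S)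
    (α β γ : ℂ)
    (htri : S⁻¹ * A (m - 1) * S = !![α, γ; 0, β])
    (v w : ℕ → ℂ)
    (hvw : ∀ j, j ≤ m - 2 →
      S⁻¹ * A j * S = !![v (2 * j), w (2 * j); v (2 * j + 1), w (2 * j + 1)])
    (φ1 φ2 : ℝ → ℝ)
    (hφ1 : ∀ x : ℝ, φ1 x = x ^ m - ‖α‖ * x ^ (m - 1)
        - ∑ k ∈ Finset.Icc 1 (m - 1),
            (‖v (n - 1 - 2 * k)‖ + ‖v (n - 2 - 2 * k)‖) * x ^ (m - 1 - k))
    (hφ2 : ∀ x : ℝ, φ2 x = x ^ m - (‖β‖ + ‖γ‖) * x ^ (m - 1)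
        - ∑ k ∈ Finset.Icc 1 (m - 1),
            (‖w (n - 1 - 2 * k)‖ + ‖w (n - 2 - 2 * k)‖) * x ^ (m - 1 - k))
    (s1 s2 : ℝ) (hs1 : 0 < s1) (hs1' : φ1 s1 = 0) (hs2 : 0 < s2) (hs2' : φ2 s2 = 0) :
    ∀ z : ℂ, p.eval z = 0 → ‖z‖ ≤ Real.sqrt (max s1 s2) := by
  intro z hz
  subst hn
  have hq : ∑ i ∈ range (2 * m), a i * z ^ i = -z ^ (2 * m) :=
    sum_padded_coeff_mul_pow (by rw [hm]) haeven haodd (by simpa [hp, eval_finsetSum] using hz)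
  have hm0 : m ≠ 0 := by rintro rfl; simp at hq
  have hy : S⁻¹ *ᵥ ![z + a (2 * m - 1), 1] ≠ 0 := fun h => by
    have hx := congrArg (S *ᵥ ·) h
    simp only [mulVec_mulVec, mul_nonsing_inv _ ((isUnit_iff_isUnit_det S).mp hS), one_mulVec,
      mulVec_zero] at hx
    simpa using congrFun hx 1
  obtain ⟨col, hcol⟩ := exists_pow_le_sum_norm_col hy
    (sum_smul_conj_mulVec hS (sum_pow_smul_mulVec_eq_pow_smul_of_root hm0 hA0 hA hq))
  obtain ⟨k, rfl⟩ : ∃ k, m = k + 1 := ⟨m - 1, by omega⟩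
  simp only [Nat.add_sub_cancel] at htri hφ1 hφ2
  rw [norm_pow] at hcol
  apply Real.le_sqrt_of_sq_le
  fin_cases col
  · refine (le_of_pow_le_sum_of_root (fun j => by positivity) hs1 ?_ hcol).trans (le_max_left _ _)
    refine pow_succ_eq_sum_of_phi_eq_zero (fun j hj => ?_) ?_ ((hφ1 s1).symm.trans hs1')
    · simp [hvw j (by omega), Fin.sum_univ_two]
    · simp [htri, Fin.sum_univ_two]
  · refine (le_of_pow_le_sum_of_root (fun j => by positivity) hs2 ?_ hcol).trans (le_max_right _ _)
    refine pow_succ_eq_sum_of_phi_eq_zero (fun j hj => ?_) ?_ ((hφ2 s2).symm.trans hs2')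
    · simp [hvw j (by omega), Fin.sum_univ_two]
    · simp [htri, Fin.sum_univ_two, add_comm]

theorem cauchy_like_phi
    (ℓ : ℕ) (hℓ : 3 ≤ ℓ) (b : ℕ → ℂ) (p : Polynomial ℂ)
    (hp : p = X ^ ℓ + ∑ i ∈ Finset.range ℓ, C (b i) * X ^ i)
    (m n : ℕ) (hm : m = (ℓ + 1) / 2) (hn : n = 2 * m)
    (a : ℕ → ℂ)
    (haeven : Even ℓ → ∀ j, j < n → a j = b j)
    (haodd : ¬ Even ℓ → a 0 = 0 ∧ ∀ j, 1 ≤ j → j < n → a j = b (j - 1))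
    (A : ℕ → Matrix (Fin 2) (Fin 2) ℂ)
    (hA0 : A 0 = !![-(a 0), a (n - 1) * a 0; -(a 1), a (n - 1) * a 1 - a 0])
    (hA : ∀ j, 1 ≤ j → j ≤ m - 1 →
      A j = !![-(a (2 * j)), a (n - 1) * a (2 * j) - a (2 * j - 1);
               -(a (2 * j + 1)), a (n - 1) * a (2 * j + 1) - a (2 * j)])
    (S : Matrix (Fin 2) (Fin 2) ℂ) (hS : IsUnit S)
    (α β γ : ℂ)
    (htri : S⁻¹ * A (m - 1) * S = !![α, γ; 0, β])
    (v w : ℕ → ℂ)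
    (hvw : ∀ j, j ≤ m - 2 →
      S⁻¹ * A j * S = !![v (2 * j), w (2 * j); v (2 * j + 1), w (2 * j + 1)])
    (φ1 φ2 : ℝ → ℝ)
    (hφ1 : ∀ x : ℝ, φ1 x = x ^ m - ‖α‖ * x ^ (m - 1)
        - ∑ k ∈ Finset.Icc 1 (m - 1),
            (‖v (n - 1 - 2 * k)‖ + ‖v (n - 2 - 2 * k)‖) * x ^ (m - 1 - k))
    (hφ2 : ∀ x : ℝ, φ2 x = x ^ m - (‖β‖ + ‖γ‖) * x ^ (m - 1)
        - ∑ k ∈ Finset.Icc 1 (m - 1),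
            (‖w (n - 1 - 2 * k)‖ + ‖w (n - 2 - 2 * k)‖) * x ^ (m - 1 - k))
    (s1 s2 : ℝ) (hs1 : 0 < s1) (hs1' : φ1 s1 = 0) (hs2 : 0 < s2) (hs2' : φ2 s2 = 0) :
    ∀ z : ℂ, p.eval z = 0 → ‖z‖ ≤ Real.sqrt (max s1 s2) :=
  cauchy_like_phi_general ℓ b p hp m n hm hn a haeven haodd A hA0 hA S hS α β γ htri v w hvw φ1 φ2
    hφ1 hφ2 s1 s2 hs1 hs1' hs2 hs2'
end

section
/- Let a_{n−1}, a_{n−2}, a_{n−3} ∈ ℂ and define the 2×2 complex matrix A_{m−1} = [[−a_{n−2}, a_{n−1}a_{n−2} − a_{n−3}],[−a_{n−1}, a_{n−1}² − a_{n−2}]]. If a_{n−1}(a_{n−1}³ − 4a_{n−1}a_{n−2} + 4a_{n−3}) = 0 and it is not the case that both a_{n−1} = 0 and a_{n−3} = 0, then A_{m−1} is not diagonalizable over ℂ (i.e., there is no invertible 2×2 complex matrix S with S^{−1}A_{m−1}S diagonal). -/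
/-!
A diagonalizable `2 × 2` matrix with vanishing discriminant `tr² - 4 det` has equal eigenvalues,
so it is conjugate to, hence equal to, a scalar matrix. The hypothesis
`a₁ (a₁³ - 4 a₁ a₂ + 4 a₃) = 0` says exactly that the discriminant of `A` vanishes, while `A` is
scalar only when both off-diagonal entries `-a₁` and `a₁ a₂ - a₃` vanish, i.e. `a₁ = a₃ = 0`.
-/

namespace Matrix

variable {R : Type*} [CommRing R]

theorem discr_conj_of_isUnit {n : Type*} [Fintype n] [DecidableEq n] {S : Matrix n n R}
    (hS : IsUnit S) (M : Matrix n n R) : (S⁻¹ * M * S).discr = M.discr :=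
  discr_conj' hS.unit M

theorem eq_smul_one_of_conj_eq_smul_one {n : Type*} [Fintype n] [DecidableEq n]
    {S M : Matrix n n R} (hS : IsUnit S) {c : R} (h : S⁻¹ * M * S = c • 1) : M = c • 1 := by
  have hdet : IsUnit S.det := (isUnit_iff_isUnit_det S).mp hS
  calc M = S * (S⁻¹ * M * S) * S⁻¹ := by
        simp only [Matrix.mul_assoc, mul_nonsing_inv S hdet, Matrix.mul_one,
          ← Matrix.mul_assoc S, Matrix.one_mul]
    _ = c • 1 := by
        rw [h, Matrix.mul_smul, Matrix.mul_one, Matrix.smul_mul, mul_nonsing_inv S hdet]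

theorem discr_diagonal_fin_two (d₁ d₂ : R) : (!![d₁, 0; 0, d₂]).discr = (d₁ - d₂) ^ 2 := by
  rw [discr_fin_two, trace_fin_two, det_fin_two]
  simp only [of_apply, cons_val', cons_val_zero, cons_val_one, empty_val', cons_val_fin_one]
  ring

theorem eq_smul_one_of_conj_eq_diagonal_of_discr_eq_zero [IsReduced R]
    {S M : Matrix (Fin 2) (Fin 2) R} (hS : IsUnit S) {d₁ d₂ : R}
    (hD : S⁻¹ * M * S = !![d₁, 0; 0, d₂]) (hM : M.discr = 0) : M = d₁ • 1 := by
  have hsq : (d₁ - d₂) ^ 2 = 0 := by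
    rw [← discr_diagonal_fin_two, ← hD, discr_conj_of_isUnit hS, hM]
  have hd : d₁ = d₂ := sub_eq_zero.mp (IsReduced.eq_zero _ ⟨2, hsq⟩)
  refine eq_smul_one_of_conj_eq_smul_one hS ?_
  rw [hD, ← hd]
  ext i j
  fin_cases i <;> fin_cases j <;> simp

end Matrix

theorem A_not_diagonalizable
    (an1 an2 an3 : ℂ)
    (M : Matrix (Fin 2) (Fin 2) ℂ)
    (hM : M = !![-an2, an1 * an2 - an3; -an1, an1 ^ 2 - an2])
    (h : an1 * (an1 ^ 3 - 4 * an1 * an2 + 4 * an3) = 0)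
    (h' : ¬ (an1 = 0 ∧ an3 = 0)) :
    ¬ ∃ S : Matrix (Fin 2) (Fin 2) ℂ, IsUnit S ∧
      ∃ d1 d2 : ℂ, S⁻¹ * M * S = !![d1, 0; 0, d2] := by
  rintro ⟨S, hS, d1, d2, hD⟩
  have hdiscr : M.discr = an1 * (an1 ^ 3 - 4 * an1 * an2 + 4 * an3) := by
    rw [Matrix.discr_fin_two, Matrix.trace_fin_two, Matrix.det_fin_two, hM]
    simp only [Matrix.of_apply, Matrix.cons_val', Matrix.cons_val_zero, Matrix.cons_val_one,
      Matrix.empty_val', Matrix.cons_val_fin_one]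
    ring
  have hscalar := Matrix.eq_smul_one_of_conj_eq_diagonal_of_discr_eq_zero hS hD (hdiscr.trans h)
  have han1 : an1 = 0 := by simpa [hM] using congrFun (congrFun hscalar 1) 0
  have han3 : an3 = 0 := by simpa [hM, han1] using congrFun (congrFun hscalar 0) 1
  exact h' ⟨han1, han3⟩
end

section
/- (Cauchy's theorem, scalar version.) Let p(z) = z^n + a_{n−1}z^{n−1} + … + a_1 z + a_0 be a monic polynomial with complex coefficients, n ≥ 2, and suppose not all of a_0,…,a_{n−1} are zero. Then the real polynomial f(x) = x^n − |a_{n−1}| x^{n−1} − … − |a_1| x − |a_0| has a unique positive root s, and every zero z of p satisfies |z| ≤ s. -/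
/-!
Substituting `u = 1 / t`, the equation `t ^ n = ∑ |a_j| t ^ j` on `t > 0` becomes `R u = 1` for
`R u = ∑ |a_j| u ^ (n - j)` (`cauchyReciprocal`). Every exponent `n - j` is positive and some
coefficient is nonzero, so `R` vanishes at `0`, is strictly increasing on `[0, ∞)` and unbounded:
it takes the value `1` exactly once, at some `u > 0`, and `s = 1 / u`. A zero `z` of `p` satisfies
`|z| ^ n ≤ ∑ |a_j| |z| ^ j`, i.e. `R (1 / |z|) ≥ 1 = R u`, whence `1 / |z| ≥ u` by monotonicity.
-/

open Polynomial Finset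

noncomputable def cauchyReciprocal (b : ℕ → ℝ) (n : ℕ) (u : ℝ) : ℝ :=
  ∑ j ∈ range n, b j * u ^ (n - j)

namespace cauchyReciprocal

variable {b : ℕ → ℝ} {n J : ℕ}

theorem continuous (b : ℕ → ℝ) (n : ℕ) : Continuous (cauchyReciprocal b n) := by
  unfold cauchyReciprocal
  fun_prop

theorem apply_zero (b : ℕ → ℝ) (n : ℕ) : cauchyReciprocal b n 0 = 0 :=
  sum_eq_zero fun j hj => by
    rw [zero_pow (by have := mem_range.1 hj; omega), mul_zero]

theorem sum_mul_pow_eq {t : ℝ} (ht : t ≠ 0) :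
    ∑ j ∈ range n, b j * t ^ j = t ^ n * cauchyReciprocal b n t⁻¹ := by
  rw [cauchyReciprocal, mul_sum]
  refine sum_congr rfl fun j hj => ?_
  rw [← pow_sub_mul_pow t (mem_range.1 hj).le, inv_pow]
  field_simp

theorem strictMonoOn (hb : ∀ j, 0 ≤ b j) (hJ : J < n) (hbJ : 0 < b J) :
    StrictMonoOn (cauchyReciprocal b n) (Set.Ici 0) := by
  intro x hx y _ hxy
  refine sum_lt_sum (fun j _ => ?_) ⟨J, mem_range.2 hJ, ?_⟩
  · exact mul_le_mul_of_nonneg_left (pow_le_pow_left₀ hx hxy.le _) (hb j)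
  · exact mul_lt_mul_of_pos_left (pow_lt_pow_left₀ hxy hx (by omega)) hbJ

theorem exists_eq_one (hb : ∀ j, 0 ≤ b j) (hJ : J < n) (hbJ : 0 < b J) :
    ∃ u, 0 < u ∧ cauchyReciprocal b n u = 1 := by
  set M := max 1 (b J)⁻¹
  have hM : 1 ≤ M := le_max_left _ _
  have hRM : 1 ≤ cauchyReciprocal b n M :=
    calc 1 = b J * (b J)⁻¹ := (mul_inv_cancel₀ hbJ.ne').symm
      _ ≤ b J * M ^ (n - J) := by
        gcongr
        exact (le_max_right _ _).trans (le_self_pow₀ hM (by omega))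
      _ ≤ cauchyReciprocal b n M :=
        single_le_sum (f := fun j => b j * M ^ (n - j))
          (fun j _ => mul_nonneg (hb j) (by positivity)) (mem_range.2 hJ)
  have h01 : (1 : ℝ) ∈ Set.Icc (cauchyReciprocal b n 0) (cauchyReciprocal b n M) :=
    ⟨(apply_zero b n).le.trans zero_le_one, hRM⟩
  obtain ⟨u, hu, hRu⟩ := intermediate_value_Icc (by positivity) (continuous b n).continuousOn h01
  refine ⟨u, hu.1.lt_of_ne ?_, hRu⟩
  rintro rfl
  simp [apply_zero] at hRu

end cauchyReciprocal

theorem norm_pow_le_sum_of_eval_eq_zero {𝕜 : Type*} [NormedField 𝕜] {n : ℕ} {a : ℕ → 𝕜}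
    {z : 𝕜} (hz : (X ^ n + ∑ i ∈ range n, C (a i) * X ^ i).eval z = 0) :
    ‖z‖ ^ n ≤ ∑ i ∈ range n, ‖a i‖ * ‖z‖ ^ i := by
  simp only [eval_add, eval_pow, eval_X, eval_finsetSum, eval_mul, eval_C,
    add_eq_zero_iff_eq_neg] at hz
  calc ‖z‖ ^ n = ‖∑ i ∈ range n, a i * z ^ i‖ := by rw [← norm_pow, hz, norm_neg]
    _ ≤ ∑ i ∈ range n, ‖a i * z ^ i‖ := norm_sum_le _ _
    _ = ∑ i ∈ range n, ‖a i‖ * ‖z‖ ^ i := by simp only [norm_mul, norm_pow]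

theorem cauchy_scalar_general
    (n : ℕ) (a : ℕ → ℂ) (p : Polynomial ℂ)
    (hp : p = X ^ n + ∑ i ∈ Finset.range n, C (a i) * X ^ i)
    (ha : ∃ j, j < n ∧ a j ≠ 0) :
    ∃ s : ℝ, 0 < s ∧
      (s ^ n - ∑ j ∈ Finset.range n, ‖a j‖ * s ^ j = 0) ∧
      (∀ t : ℝ, 0 < t → t ^ n - ∑ j ∈ Finset.range n, ‖a j‖ * t ^ j = 0 → t = s) ∧
      (∀ z : ℂ, p.eval z = 0 → ‖z‖ ≤ s) := by
  obtain ⟨J, hJ, haJ⟩ := ha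
  have hR := cauchyReciprocal.strictMonoOn (fun j => norm_nonneg (a j)) hJ (norm_pos_iff.2 haJ)
  obtain ⟨u, hu, hRu⟩ :=
    cauchyReciprocal.exists_eq_one (fun j => norm_nonneg (a j)) hJ (norm_pos_iff.2 haJ)
  have root_iff {t : ℝ} (ht : 0 < t) :
      t ^ n - ∑ j ∈ range n, ‖a j‖ * t ^ j = 0 ↔ t⁻¹ = u := by
    rw [cauchyReciprocal.sum_mul_pow_eq ht.ne', sub_eq_zero, eq_comm, mul_eq_left₀ (by positivity),
      ← hRu, hR.injOn.eq_iff (inv_pos.2 ht).le hu.le]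
  refine ⟨u⁻¹, inv_pos.2 hu, (root_iff (inv_pos.2 hu)).2 (inv_inv u),
    fun t ht hroot => by rw [← (root_iff ht).1 hroot, inv_inv], fun z hz => ?_⟩
  by_contra! hzu
  have hz0 : 0 < ‖z‖ := (inv_pos.2 hu).trans hzu
  have hle := norm_pow_le_sum_of_eval_eq_zero (hp ▸ hz)
  rw [cauchyReciprocal.sum_mul_pow_eq hz0.ne', le_mul_iff_one_le_right (by positivity)] at hle
  have hlt := hR (inv_pos.2 hz0).le hu.le (inv_lt_of_inv_lt₀ hu hzu)
  exact (hRu ▸ hlt).not_ge hle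

theorem cauchy_scalar
    (n : ℕ) (hn : 2 ≤ n) (a : ℕ → ℂ) (p : Polynomial ℂ)
    (hp : p = X ^ n + ∑ i ∈ Finset.range n, C (a i) * X ^ i)
    (ha : ∃ j, j < n ∧ a j ≠ 0) :
    ∃ s : ℝ, 0 < s ∧
      (s ^ n - ∑ j ∈ Finset.range n, ‖a j‖ * s ^ j = 0) ∧
      (∀ t : ℝ, 0 < t → t ^ n - ∑ j ∈ Finset.range n, ‖a j‖ * t ^ j = 0 → t = s) ∧
      (∀ z : ℂ, p.eval z = 0 → ‖z‖ ≤ s) :=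
  cauchy_scalar_general n a p hp ha
end

section
/- (Pellet's theorem, scalar version.) Let p(z) = z^n + a_{n−1}z^{n−1} + … + a_1 z + a_0 be a monic polynomial with complex coefficients, n ≥ 2, let 1 ≤ k ≤ n−1 with a_k ≠ 0, and suppose the real polynomial f(x) = x^n + |a_{n−1}| x^{n−1} + … + |a_{k+1}| x^{k+1} − |a_k| x^k + |a_{k−1}| x^{k−1} + … + |a_1| x + |a_0| has two distinct positive roots x1 < x2. Then, counting multiplicity, p has exactly k zeros z with |z| ≤ x1, and p has no zero z with x1 < |z| < x2. -/
/-!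
Write `p = a_k z^k + Q`. The triangle inequality gives `‖Q(z)‖ ≤ |z|^n + ∑_{j ≠ k} |a_j| |z|^j`,
so `‖Q(z)‖ < ‖a_k z^k‖` wherever `f(|z|) < 0`. Now `f(x) / x^k` is a nonnegative combination of
integer powers of `x` minus a constant, hence convex on `(0, ∞)`; it vanishes at `x₁` and `x₂`, and
since `f` is a nonzero polynomial it is negative on `(x₁, x₂)`. So `p` has no zero in the annulus,
and Rouché's theorem on a circle `|z| = r` with `x₁ < r < x₂` shows that `p` has as many zeros in
`|z| < r` as `a_k z^k`, namely `k`.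
-/

open Polynomial

open Classical in
/-- Number of roots (counted with multiplicity) of `p` satisfying predicate `P`. -/
noncomputable def rcount (p : Polynomial ℂ) (P : ℂ → Prop) : ℕ :=
  Multiset.card (p.roots.filter P)

open Metric Set Real

theorem circleIntegral_sub_inv_of_notMem_closedBall {c w : ℂ} {R : ℝ} (hR : 0 ≤ R)
    (hw : w ∉ closedBall c R) : (∮ z in C(c, R), (z - w)⁻¹) = 0 := by
  refine DiffContOnCl.circleIntegral_eq_zero hR
    (DifferentiableOn.diffContOnCl_ball (U := {w}ᶜ) (fun z hz => ?_) fun z hz hzw => hw (hzw ▸ hz))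
  exact ((differentiableAt_id.sub_const w).inv (sub_ne_zero.mpr hz)).differentiableWithinAt

open Classical in
theorem circleIntegral_multiset_sum_sub_inv {c : ℂ} {R : ℝ} (hR : 0 ≤ R) (M : Multiset ℂ)
    (hM : ∀ w ∈ M, w ∉ sphere c R) :
    (∮ z in C(c, R), (M.map fun w => (z - w)⁻¹).sum) =
      2 * π * Complex.I * Multiset.card (M.filter (· ∈ ball c R)) := by
  induction M using Multiset.induction_on with
  | empty => simp [circleIntegral]
  | cons w M ih =>
    have hw : w ∉ sphere c R := hM w (Multiset.mem_cons_self w M)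
    have hM' : ∀ v ∈ M, v ∉ sphere c R := fun v hv => hM v (Multiset.mem_cons_of_mem hv)
    have hint : CircleIntegrable (fun z => (M.map fun v => (z - v)⁻¹).sum) c R :=
      (continuousOn_multiset_sum M fun v hv => (continuous_sub_right v).continuousOn.inv₀
        fun z hz h => hM' v hv (by rwa [← sub_eq_zero.mp h])).circleIntegrable hR
    simp only [Multiset.map_cons, Multiset.sum_cons]
    have hint_w : CircleIntegrable (fun z => (z - w)⁻¹) c R :=
      circleIntegrable_sub_inv_iff.mpr (Or.inr (by rwa [abs_of_nonneg hR]))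
    rw [circleIntegral.integral_add hint_w hint, ih hM', Multiset.filter_cons]
    by_cases hwb : w ∈ ball c R
    · simp only [circleIntegral.integral_sub_inv_of_mem_ball hwb, hwb, ↓reduceIte,
        Multiset.singleton_add, Multiset.card_cons, Nat.cast_add, Nat.cast_one]
      ring
    · have hwc : w ∉ closedBall c R := by
        rw [← ball_union_sphere]
        exact fun h => h.elim hwb hw
      simp [hwb, circleIntegral_sub_inv_of_notMem_closedBall hR hwc]

open Classical in
theorem Polynomial.circleIntegral_derivative_div_eq_card_roots {p : ℂ[X]} {c : ℂ} {R : ℝ}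
    (hR : 0 ≤ R) (hp : ∀ z ∈ sphere c R, p.eval z ≠ 0) :
    (∮ z in C(c, R), p.derivative.eval z / p.eval z) =
      2 * π * Complex.I * Multiset.card (p.roots.filter (· ∈ ball c R)) := by
  rw [circleIntegral.integral_congr hR fun z hz =>
    (IsAlgClosed.splits p).eval_derivative_div_eval_of_ne_zero (hp z hz)]
  simp_rw [one_div]
  exact circleIntegral_multiset_sum_sub_inv hR _ fun w hw hws => hp w hws (isRoot_of_mem_roots hw)

theorem continuous_circleIntegral {X E : Type*} [TopologicalSpace X] [NormedAddCommGroup E]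
    [NormedSpace ℂ E] {f : X → ℂ → E} {c : ℂ} {R : ℝ} (hR : 0 ≤ R)
    (hf : ContinuousOn (Function.uncurry f) (univ ×ˢ sphere c R)) :
    Continuous fun x => ∮ z in C(c, R), f x z := by
  simp only [circleIntegral, deriv_circleMap]
  apply intervalIntegral.continuous_parametric_intervalIntegral_of_continuous'
  have hfc : Continuous fun q : X × ℝ => f q.1 (circleMap c R q.2) :=
    hf.comp_continuous (continuous_fst.prodMk ((continuous_circleMap c R).comp continuous_snd))
      fun q => ⟨trivial, circleMap_mem_sphere c hR q.2⟩
  exact (((continuous_circleMap 0 R).comp continuous_snd).mul continuous_const).smul hfc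

theorem PreconnectedSpace.constant_of_continuous_natCast {X : Type*} [TopologicalSpace X]
    [PreconnectedSpace X] {N : X → ℕ} (hN : Continuous fun x => (N x : ℂ)) (x y : X) :
    N x = N y := by
  have hNZ : Continuous fun x => (N x : ℤ) :=
    Complex.isClosedEmbedding_intCast.continuous_iff.mpr (by simpa [Function.comp_def] using hN)
  exact_mod_cast PreconnectedSpace.constant ‹_› hNZ

open Classical in
/-- Rouché's theorem for polynomials. Along `P + tQ`, `t ∈ [0, 1]`, no zero crosses the circle, and
the number of zeros inside is `(2πi)⁻¹ ∮ (P + tQ)' / (P + tQ)`, continuous in `t` and integral. -/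
theorem Polynomial.card_roots_filter_add_eq_of_norm_lt {P Q : ℂ[X]} {c : ℂ} {R : ℝ} (hR : 0 ≤ R)
    (hQP : ∀ z ∈ sphere c R, ‖Q.eval z‖ < ‖P.eval z‖) :
    Multiset.card ((P + Q).roots.filter (· ∈ ball c R)) =
      Multiset.card (P.roots.filter (· ∈ ball c R)) := by
  let F : unitInterval → ℂ[X] := fun t => P + C ((t : ℝ) : ℂ) * Q
  have hF : ∀ t z, z ∈ sphere c R → (F t).eval z ≠ 0 := by
    intro t z hz h
    have hPQ : ‖P.eval z‖ ≤ ‖Q.eval z‖ := calc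
      ‖P.eval z‖ = ‖((t : ℝ) : ℂ) * Q.eval z‖ := by
        simp only [F, eval_add, eval_mul, eval_C] at h
        rw [eq_neg_of_add_eq_zero_left h, norm_neg]
      _ ≤ ‖Q.eval z‖ := by
        rw [norm_mul, Complex.norm_of_nonneg t.2.1]
        exact mul_le_of_le_one_left (norm_nonneg _) t.2.2
    exact (hQP z hz).not_ge hPQ
  let N : unitInterval → ℕ := fun t => Multiset.card ((F t).roots.filter (· ∈ ball c R))
  have hN : Continuous fun t => (N t : ℂ) := by
    have hint := continuous_circleIntegral
      (f := fun t z => (F t).derivative.eval z / (F t).eval z) (c := c) hR ?_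
    · convert hint.const_mul (2 * π * Complex.I)⁻¹ with t
      rw [circleIntegral_derivative_div_eq_card_roots hR (hF t),
        inv_mul_cancel_left₀ Complex.two_pi_I_ne_zero]
    refine ContinuousOn.div ?_ ?_ fun q hq => hF q.1 q.2 hq.2
    · simp only [F, derivative_add, derivative_C_mul, eval_add, eval_mul, eval_C]
      fun_prop
    · simp only [F, eval_add, eval_mul, eval_C]
      fun_prop
  simpa [N, F] using PreconnectedSpace.constant_of_continuous_natCast hN 1 0

/-- The comparison polynomial `f` of Pellet's theorem, with `b j = ‖a j‖`. -/
noncomputable def pelletPolynomial (n k : ℕ) (b : ℕ → ℝ) : ℝ[X] :=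
  X ^ n - C (b k) * X ^ k + ∑ j ∈ (Finset.range n).erase k, C (b j) * X ^ j

noncomputable def pelletQuotient (n k : ℕ) (b : ℕ → ℝ) (x : ℝ) : ℝ :=
  x ^ ((n : ℤ) - k) - b k + ∑ j ∈ (Finset.range n).erase k, b j * x ^ ((j : ℤ) - k)

theorem ConvexOn.finsetSum {𝕜 E β ι : Type*} [Semiring 𝕜] [PartialOrder 𝕜] [AddCommMonoid E]
    [AddCommMonoid β] [PartialOrder β] [IsOrderedAddMonoid β] [SMul 𝕜 E] [Module 𝕜 β]
    {s : Set E} (hs : Convex 𝕜 s) {t : Finset ι} {f : ι → E → β}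
    (hf : ∀ i ∈ t, ConvexOn 𝕜 s (f i)) : ConvexOn 𝕜 s fun x => ∑ i ∈ t, f i x := by
  induction t using Finset.cons_induction with
  | empty => simpa using convexOn_const 0 hs
  | cons i t hi ih =>
    simp only [Finset.sum_cons]
    exact (hf i (Finset.mem_cons_self i t)).add (ih fun j hj => hf j (Finset.mem_cons_of_mem hj))

section Pellet

variable {n k : ℕ} {b : ℕ → ℝ}

theorem eval_pelletPolynomial (x : ℝ) :
    (pelletPolynomial n k b).eval x =
      x ^ n - b k * x ^ k + ∑ j ∈ (Finset.range n).erase k, b j * x ^ j := by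
  simp [pelletPolynomial, eval_finsetSum]

theorem pelletPolynomial_monic (hk : k < n) : (pelletPolynomial n k b).Monic := by
  have hlt : ∀ j < n, ∀ c : ℝ, C c * X ^ j ∈ degreeLT ℝ n := fun j hj c =>
    mem_degreeLT.mpr ((degree_C_mul_X_pow_le j c).trans_lt (by exact_mod_cast hj))
  rw [pelletPolynomial, sub_eq_add_neg, add_assoc]
  refine monic_X_pow_add (mem_degreeLT.mp ?_)
  refine Submodule.add_mem _ (Submodule.neg_mem _ (hlt k hk _)) (Submodule.sum_mem _ fun j hj => ?_)
  exact hlt j (Finset.mem_range.mp (Finset.mem_of_mem_erase hj)) _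

theorem eval_pelletPolynomial_eq_pow_mul {x : ℝ} (hx : x ≠ 0) :
    (pelletPolynomial n k b).eval x = x ^ k * pelletQuotient n k b x := by
  have hzpow : ∀ m : ℕ, x ^ k * x ^ ((m : ℤ) - k) = x ^ m := fun m => by
    rw [← zpow_natCast x k, ← zpow_add₀ hx, add_sub_cancel, zpow_natCast]
  simp only [eval_pelletPolynomial, pelletQuotient, mul_add, mul_sub, hzpow, Finset.mul_sum,
    mul_left_comm (x ^ k)]
  ring

theorem convexOn_pelletQuotient (hb : ∀ j, 0 ≤ b j) :
    ConvexOn ℝ (Ioi 0) (pelletQuotient n k b) :=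
  ((convexOn_zpow _).sub (concaveOn_const _ (convex_Ioi 0))).add
    (ConvexOn.finsetSum (convex_Ioi 0) fun j _ => (convexOn_zpow _).smul (hb j))

theorem eval_pelletPolynomial_neg (hk : k < n) (hb : ∀ j, 0 ≤ b j) {x₁ x₂ : ℝ} (hx₁ : 0 < x₁)
    (hx₁₂ : x₁ < x₂) (h₁ : (pelletPolynomial n k b).eval x₁ = 0)
    (h₂ : (pelletPolynomial n k b).eval x₂ = 0) {x : ℝ} (hx : x ∈ Ioo x₁ x₂) :
    (pelletPolynomial n k b).eval x < 0 := by
  set g := pelletQuotient n k b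
  have hg : ConvexOn ℝ (Ioi 0) g := convexOn_pelletQuotient hb
  have hpos : ∀ y, x₁ ≤ y → 0 < y := fun y hy => hx₁.trans_le hy
  have hfg : ∀ y, x₁ ≤ y → ((pelletPolynomial n k b).eval y = 0 ↔ g y = 0) := fun y hy => by
    rw [eval_pelletPolynomial_eq_pow_mul (hpos y hy).ne', mul_eq_zero,
      or_iff_right (pow_ne_zero _ (hpos y hy).ne')]
  have hg₁ : g x₁ = 0 := (hfg x₁ le_rfl).mp h₁
  have hg₂ : g x₂ = 0 := (hfg x₂ hx₁₂.le).mp h₂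
  have hle : ∀ y ∈ Icc x₁ x₂, g y ≤ 0 := fun y hy => by
    have := hg.le_on_segment (hpos x₁ le_rfl) (hpos x₂ hx₁₂.le) (by rwa [segment_eq_Icc hx₁₂.le])
    rwa [hg₁, hg₂, max_self] at this
  rw [eval_pelletPolynomial_eq_pow_mul (hpos x hx.1.le).ne']
  refine mul_neg_of_pos_of_neg (pow_pos (hpos x hx.1.le) k)
    ((hle x (Ioo_subset_Icc_self hx)).lt_of_ne fun hgx => ?_)
  -- a convex `g` vanishing at `x₁ < x < x₂` vanishes on `(x₁, x)`: infinitely many roots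
  have hroots : Ioo x₁ x ⊆ {y | (pelletPolynomial n k b).IsRoot y} := fun y hy => by
    refine (hfg y hy.1.le).mpr (le_antisymm (hle y ⟨hy.1.le, hy.2.le.trans hx.2.le⟩) ?_)
    rw [← hgx]
    exact hg.le_left_of_right_le'' (hpos y hy.1.le) (hpos x₂ hx₁₂.le) hy.2.le hx.2
      (by rw [hgx, hg₂])
  exact (pelletPolynomial_monic hk).ne_zero
    (eq_zero_of_infinite_isRoot _ ((Ioo_infinite hx.1).mono hroots))

theorem norm_eval_lt_of_eval_pelletPolynomial_neg {a : ℕ → ℂ} {z : ℂ}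
    (hz : (pelletPolynomial n k (‖a ·‖)).eval ‖z‖ < 0) :
    ‖(X ^ n + ∑ j ∈ (Finset.range n).erase k, C (a j) * X ^ j).eval z‖ <
      ‖(C (a k) * X ^ k).eval z‖ := by
  rw [eval_pelletPolynomial] at hz
  calc _ ≤ ‖z‖ ^ n + ∑ j ∈ (Finset.range n).erase k, ‖a j‖ * ‖z‖ ^ j := by
        simp only [eval_add, eval_pow, eval_X, eval_finsetSum, eval_mul, eval_C]
        refine (norm_add_le _ _).trans
          (add_le_add (norm_pow _ _).le ((norm_sum_le _ _).trans_eq ?_))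
        simp only [norm_mul, norm_pow]
    _ < ‖a k‖ * ‖z‖ ^ k := by linarith
    _ = _ := by simp

end Pellet

theorem pellet_scalar_general
    (n : ℕ) (a : ℕ → ℂ) (p : Polynomial ℂ)
    (hp : p = X ^ n + ∑ i ∈ Finset.range n, C (a i) * X ^ i)
    (k : ℕ) (hk1 : 1 ≤ k) (hk2 : k ≤ n - 1) (hak : a k ≠ 0)
    (f : ℝ → ℝ)
    (hf : ∀ x : ℝ, f x = x ^ n - ‖a k‖ * x ^ k
        + ∑ j ∈ (Finset.range n).erase k, ‖a j‖ * x ^ j)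
    (x1 x2 : ℝ) (hx1 : 0 < x1) (hx12 : x1 < x2) (hfx1 : f x1 = 0) (hfx2 : f x2 = 0) :
    rcount p (fun z => ‖z‖ ≤ x1) = k ∧
    ∀ z : ℂ, p.eval z = 0 → ¬ (x1 < ‖z‖ ∧ ‖z‖ < x2) := by
  classical
  have hk : k < n := by omega
  have hfF : ∀ x, f x = (pelletPolynomial n k (‖a ·‖)).eval x := fun x => by
    rw [hf, eval_pelletPolynomial]
  set P := C (a k) * X ^ k
  set Q := X ^ n + ∑ j ∈ (Finset.range n).erase k, C (a j) * X ^ j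
  have hpPQ : p = P + Q := by
    rw [hp, ← Finset.add_sum_erase _ _ (Finset.mem_range.mpr hk)]
    ring
  have hdom : ∀ z : ℂ, x1 < ‖z‖ → ‖z‖ < x2 → ‖Q.eval z‖ < ‖P.eval z‖ := fun z h1 h2 =>
    norm_eval_lt_of_eval_pelletPolynomial_neg <| eval_pelletPolynomial_neg hk
      (fun j => norm_nonneg _) hx1 hx12 (hfF x1 ▸ hfx1) (hfF x2 ▸ hfx2) ⟨h1, h2⟩
  have hgap : ∀ z : ℂ, p.eval z = 0 → ¬ (x1 < ‖z‖ ∧ ‖z‖ < x2) := by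
    rintro z hz ⟨h1, h2⟩
    rw [hpPQ, eval_add, add_eq_zero_iff_eq_neg] at hz
    exact (hdom z h1 h2).ne' (by rw [hz, norm_neg])
  refine ⟨?_, hgap⟩
  obtain ⟨r, hr1, hr2⟩ := exists_between hx12
  have hcount := card_roots_filter_add_eq_of_norm_lt (P := P) (Q := Q) (c := 0) (R := r)
    (by linarith) fun z hz => by
      rw [mem_sphere_zero_iff_norm] at hz
      exact hdom z (by linarith) (by linarith)
  rw [← hpPQ, roots_C_mul_X_pow hak, Multiset.filter_nsmul, Multiset.filter_singleton,
    if_pos (by simpa using hx1.trans hr1), Multiset.card_nsmul, Multiset.card_singleton,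
    mul_one] at hcount
  refine (congrArg _ (Multiset.filter_congr fun z hz => ?_)).trans hcount
  have hz := hgap z (mem_roots'.mp hz).2
  rw [mem_ball_zero_iff]
  exact ⟨fun h => h.trans_lt hr1, fun h => not_lt.mp fun h' => hz ⟨h', h.trans hr2⟩⟩

theorem pellet_scalar
    (n : ℕ) (hn : 2 ≤ n) (a : ℕ → ℂ) (p : Polynomial ℂ)
    (hp : p = X ^ n + ∑ i ∈ Finset.range n, C (a i) * X ^ i)
    (k : ℕ) (hk1 : 1 ≤ k) (hk2 : k ≤ n - 1) (hak : a k ≠ 0)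
    (f : ℝ → ℝ)
    (hf : ∀ x : ℝ, f x = x ^ n - ‖a k‖ * x ^ k
        + ∑ j ∈ (Finset.range n).erase k, ‖a j‖ * x ^ j)
    (x1 x2 : ℝ) (hx1 : 0 < x1) (hx12 : x1 < x2) (hfx1 : f x1 = 0) (hfx2 : f x2 = 0) :
    rcount p (fun z => ‖z‖ ≤ x1) = k ∧
    ∀ z : ℂ, p.eval z = 0 → ¬ (x1 < ‖z‖ ∧ ‖z‖ < x2) :=
  pellet_scalar_general n a p hp k hk1 hk2 hak f hf x1 x2 hx1 hx12 hfx1 hfx2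
end

section
/- (Cauchy's theorem, matrix version, spectral norm.) Let P(z) = Iz^n + A_{n−1}z^{n−1} + … + A_1 z + A_0, where n ≥ 2, the A_j are m×m complex matrices not all zero, I is the m×m identity matrix, and ‖·‖ denotes the spectral norm (operator norm induced by the Euclidean norm). Then the real polynomial f(x) = x^n − ‖A_{n−1}‖ x^{n−1} − … − ‖A_1‖ x − ‖A_0‖ has a unique positive root s, and every eigenvalue of P, i.e., every z ∈ ℂ with det(P(z)) = 0, satisfies |z| ≤ s. -/
/-!
For `x > 0`, dividing `x ^ n - ∑_{j<n} c_j x ^ j` by `x ^ n` gives `1 - ∑_{j<n} c_j / x ^ (n - j)`.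
With `c_j ≥ 0`, not all zero, this sum is strictly decreasing on `(0, ∞)`, from `∞` down to `0`,
so it equals `1` at exactly one point `s`, and `x ^ n ≤ ∑_{j<n} c_j x ^ j` holds for `x > 0`
exactly when `x ≤ s`. If `P(z) w = 0` with `w ≠ 0`, then `z ^ n w = -∑_{j<n} z ^ j A_j w`, and
taking norms gives `‖z‖ ^ n ≤ ∑_{j<n} ‖A_j‖ ‖z‖ ^ j`, hence `‖z‖ ≤ s`.
-/

open Polynomial

/-- The spectral norm (operator norm induced by the Euclidean norm) of a complex matrix. -/
noncomputable def specNorm {d : ℕ} (M : Matrix (Fin d) (Fin d) ℂ) : ℝ :=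
  ‖Matrix.toEuclideanCLM (𝕜 := ℂ) M‖

open Finset Set

noncomputable def cauchyRatio (c : ℕ → ℝ) (n : ℕ) (x : ℝ) : ℝ :=
  ∑ j ∈ range n, c j / x ^ (n - j)

section CauchyRatio

variable {c : ℕ → ℝ} {n : ℕ}

theorem pow_sub_sum_eq_pow_mul_one_sub_cauchyRatio {x : ℝ} (hx : x ≠ 0) :
    x ^ n - ∑ j ∈ range n, c j * x ^ j = x ^ n * (1 - cauchyRatio c n x) := by
  rw [cauchyRatio, mul_one_sub, mul_sum]
  congr 1
  refine sum_congr rfl fun j hj => ?_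
  rw [← Nat.add_sub_cancel' (mem_range.1 hj).le, pow_add, Nat.add_sub_cancel_left]
  field_simp

theorem pow_sub_sum_eq_zero_iff_cauchyRatio_eq_one {x : ℝ} (hx : 0 < x) :
    x ^ n - ∑ j ∈ range n, c j * x ^ j = 0 ↔ cauchyRatio c n x = 1 := by
  rw [pow_sub_sum_eq_pow_mul_one_sub_cauchyRatio hx.ne',
    mul_eq_zero_iff_left (pow_ne_zero _ hx.ne'), sub_eq_zero, eq_comm]

theorem pow_le_sum_iff_one_le_cauchyRatio {x : ℝ} (hx : 0 < x) :
    x ^ n ≤ ∑ j ∈ range n, c j * x ^ j ↔ 1 ≤ cauchyRatio c n x := by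
  rw [← sub_nonpos, pow_sub_sum_eq_pow_mul_one_sub_cauchyRatio hx.ne', ← mul_zero (x ^ n),
    mul_le_mul_iff_of_pos_left (pow_pos hx n), sub_nonpos]

theorem continuousOn_cauchyRatio : ContinuousOn (cauchyRatio c n) (Ioi 0) :=
  continuousOn_finsetSum _ fun _ _ =>
    continuousOn_const.div (continuous_pow _).continuousOn fun _ hx => pow_ne_zero _ (ne_of_gt hx)

theorem strictAntiOn_cauchyRatio {k : ℕ} (hc : ∀ j, 0 ≤ c j) (hk : k < n) (hck : 0 < c k) :
    StrictAntiOn (cauchyRatio c n) (Ioi 0) := by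
  intro x hx y _ hxy
  apply sum_lt_sum
  · intro j _
    exact div_le_div_of_nonneg_left (hc j) (pow_pos hx _) (pow_le_pow_left₀ hx.le hxy.le _)
  · exact ⟨k, mem_range.2 hk,
      div_lt_div_of_pos_left hck (pow_pos hx _) (pow_lt_pow_left₀ hxy hx.le (by omega))⟩

theorem exists_cauchyRatio_eq_one {k : ℕ} (hc : ∀ j, 0 ≤ c j) (hk : k < n) (hck : 0 < c k) :
    ∃ s, 0 < s ∧ cauchyRatio c n s = 1 := by
  set a := min 1 (c k)
  set b := ∑ j ∈ range n, c j + 1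
  have ha : 0 < a := lt_min one_pos hck
  have hb : 1 ≤ b := le_add_of_nonneg_left (sum_nonneg fun j _ => hc j)
  have one_le_at_a : 1 ≤ cauchyRatio c n a :=
    calc 1 ≤ c k / a := (one_le_div ha).2 (min_le_right _ _)
      _ ≤ c k / a ^ (n - k) := div_le_div_of_nonneg_left hck.le (pow_pos ha _)
          (pow_le_of_le_one ha.le (min_le_left _ _) (by omega))
      _ ≤ cauchyRatio c n a := single_le_sum (f := fun j => c j / a ^ (n - j))
          (fun j _ => div_nonneg (hc j) (pow_nonneg ha.le _)) (mem_range.2 hk)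
  have at_b_le_one : cauchyRatio c n b ≤ 1 :=
    calc cauchyRatio c n b ≤ ∑ j ∈ range n, c j / b := sum_le_sum fun j hj =>
          div_le_div_of_nonneg_left (hc j) (by positivity)
            (le_self_pow₀ hb (by have := mem_range.1 hj; omega))
      _ ≤ 1 := by rw [← sum_div, div_le_one (by positivity)]; linarith
  obtain ⟨s, hs, hs_eq⟩ := intermediate_value_Icc' ((min_le_left _ _).trans hb)
    (continuousOn_cauchyRatio.mono fun x hx => ha.trans_le hx.1) ⟨at_b_le_one, one_le_at_a⟩
  exact ⟨s, ha.trans_le hs.1, hs_eq⟩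

end CauchyRatio

theorem norm_pow_le_sum_opNorm_mul_pow {𝕜 E : Type*} [NontriviallyNormedField 𝕜]
    [NormedAddCommGroup E] [NormedSpace 𝕜 E] {n : ℕ} (T : ℕ → E →L[𝕜] E) {z : 𝕜} {w : E}
    (hw : w ≠ 0) (h : z ^ n • w + ∑ j ∈ range n, z ^ j • T j w = 0) :
    ‖z‖ ^ n ≤ ∑ j ∈ range n, ‖T j‖ * ‖z‖ ^ j := by
  refine le_of_mul_le_mul_right ?_ (norm_pos_iff.2 hw)
  calc ‖z‖ ^ n * ‖w‖ = ‖∑ j ∈ range n, z ^ j • T j w‖ := by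
        rw [← norm_pow, ← norm_smul, eq_neg_of_add_eq_zero_left h, norm_neg]
    _ ≤ ∑ j ∈ range n, ‖T j‖ * ‖z‖ ^ j * ‖w‖ := norm_sum_le_of_le _ fun j _ => by
        rw [norm_smul, norm_pow, mul_comm, mul_right_comm]
        exact mul_le_mul_of_nonneg_right ((T j).le_opNorm w) (by positivity)
    _ = (∑ j ∈ range n, ‖T j‖ * ‖z‖ ^ j) * ‖w‖ := (sum_mul ..).symm

theorem Matrix.exists_toEuclideanCLM_apply_eq_zero {𝕜 ι : Type*} [RCLike 𝕜] [Fintype ι]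
    [DecidableEq ι] {M : Matrix ι ι 𝕜} (hM : M.det = 0) :
    ∃ w ≠ 0, toEuclideanCLM (𝕜 := 𝕜) M w = 0 := by
  obtain ⟨v, hv, hMv⟩ := Matrix.exists_mulVec_eq_zero_iff.2 hM
  exact ⟨WithLp.toLp 2 v, by simpa using hv, by simp [hMv]⟩

theorem specNorm_pos {d : ℕ} {M : Matrix (Fin d) (Fin d) ℂ} (hM : M ≠ 0) : 0 < specNorm M :=
  norm_pos_iff.2 <| (map_ne_zero_iff _ Matrix.toEuclideanCLM.injective).2 hM

theorem cauchy_matrix_general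
    (d n : ℕ) (A : ℕ → Matrix (Fin d) (Fin d) ℂ)
    (hA : ∃ j, j < n ∧ A j ≠ 0) :
    ∃ s : ℝ, 0 < s ∧
      (s ^ n - ∑ j ∈ Finset.range n, specNorm (A j) * s ^ j = 0) ∧
      (∀ t : ℝ, 0 < t → t ^ n - ∑ j ∈ Finset.range n, specNorm (A j) * t ^ j = 0 → t = s) ∧
      (∀ z : ℂ, Matrix.det (z ^ n • (1 : Matrix (Fin d) (Fin d) ℂ)
          + ∑ j ∈ Finset.range n, z ^ j • A j) = 0 → ‖z‖ ≤ s) := by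
  obtain ⟨k, hk, hAk⟩ := hA
  have hc : ∀ j, 0 ≤ specNorm (A j) := fun j => norm_nonneg _
  have anti := strictAntiOn_cauchyRatio hc hk (specNorm_pos hAk)
  obtain ⟨s, hs, hs_one⟩ := exists_cauchyRatio_eq_one hc hk (specNorm_pos hAk)
  refine ⟨s, hs, (pow_sub_sum_eq_zero_iff_cauchyRatio_eq_one hs).2 hs_one, ?_, ?_⟩
  · intro t ht ht_root
    rw [pow_sub_sum_eq_zero_iff_cauchyRatio_eq_one ht, ← hs_one] at ht_root
    exact anti.injOn ht hs ht_root
  · intro z hz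
    rcases eq_or_ne z 0 with rfl | hz0
    · simpa using hs.le
    obtain ⟨w, hw, hPw⟩ := Matrix.exists_toEuclideanCLM_apply_eq_zero hz
    have hz_le := norm_pow_le_sum_opNorm_mul_pow
      (fun j => Matrix.toEuclideanCLM (𝕜 := ℂ) (A j)) hw
      (by simpa [map_add, map_sum, map_smul] using hPw)
    rw [pow_le_sum_iff_one_le_cauchyRatio (norm_pos_iff.2 hz0), ← hs_one] at hz_le
    exact (anti.le_iff_ge hs (norm_pos_iff.2 hz0)).1 hz_le

theorem cauchy_matrix
    (d n : ℕ) (hn : 2 ≤ n) (A : ℕ → Matrix (Fin d) (Fin d) ℂ)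
    (hA : ∃ j, j < n ∧ A j ≠ 0) :
    ∃ s : ℝ, 0 < s ∧
      (s ^ n - ∑ j ∈ Finset.range n, specNorm (A j) * s ^ j = 0) ∧
      (∀ t : ℝ, 0 < t → t ^ n - ∑ j ∈ Finset.range n, specNorm (A j) * t ^ j = 0 → t = s) ∧
      (∀ z : ℂ, Matrix.det (z ^ n • (1 : Matrix (Fin d) (Fin d) ℂ)
          + ∑ j ∈ Finset.range n, z ^ j • A j) = 0 → ‖z‖ ≤ s) :=
  cauchy_matrix_general d n A hA
end

section
/- (Pellet's theorem, matrix version, spectral norm.) Let P(z) = Iz^n + A_{n−1}z^{n−1} + … + A_1 z + A_0 with n ≥ 2, A_j ∈ ℂ^{m×m} for j = 0,…,n−1, and A_0 ≠ 0, and let ‖·‖ denote the spectral norm. Suppose A_k is invertible for some k with 1 ≤ k ≤ n−1, and the real polynomial f(x) = x^n + ‖A_{n−1}‖ x^{n−1} + … + ‖A_{k+1}‖ x^{k+1} − ‖A_k^{−1}‖^{−1} x^k + ‖A_{k−1}‖ x^{k−1} + … + ‖A_1‖ x + ‖A_0‖ has two distinct positive roots x1 < x2. Then, counting multiplicity, the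 polynomial det(P(z)) (of degree nm in z) has exactly km zeros z with |z| ≤ x1, and it has no zero z with x1 < |z| < x2. -/
open Polynomial

/-!
Write `P(z) = z^k A_k + R(z)`. Since `P(z) = z^k A_k (I + z^{-k} A_k^{-1} R(z))`, a Neumann
series shows that `P(z)` is invertible as soon as
`‖z‖^n + ∑_{j ≠ k} ‖A_j‖ ‖z‖^j < ‖A_k^{-1}‖^{-1} ‖z‖^k`, i.e. as soon as `f(‖z‖) < 0`.
And `f < 0` on `(x1, x2)`: with `x = e^y`, the function
`x^{-k} f(x) = e^{(n-k)y} - ‖A_k^{-1}‖^{-1} + ∑_{j ≠ k} ‖A_j‖ e^{(j-k)y}`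
is strictly convex in `y` and vanishes at `log x1` and `log x2`.

The same estimate holds when the coefficients `A_j`, `j ≠ k`, are multiplied by any `t` with
`‖t‖ ≤ 1`. Along this family no root crosses a circle `‖z‖ = r` with `x1 < r < x2`, so by the
argument principle the number of roots inside stays constant. At `t = 0` the determinant is
`z^{km} det(z^{n-k} I + A_k)`, and the roots of the second factor satisfy `‖z‖ ≥ x2`.
-/

open Set Real Metric Finset
open scoped Matrix.Norms.L2Operator

section Convexity

lemma strictConvexOn_exp_mul {m : ℝ} (hm : m ≠ 0) :
    StrictConvexOn ℝ univ fun y => exp (m * y) := by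
  refine ⟨convex_univ, fun x _ y _ hxy a b ha hb hab => ?_⟩
  have := strictConvexOn_exp.2 (mem_univ (m * x)) (mem_univ (m * y))
    (by simpa [hm] using hxy) ha hb hab
  simpa only [smul_eq_mul, mul_add, mul_left_comm m] using this

lemma convexOn_exp_mul (m : ℝ) : ConvexOn ℝ univ fun y => exp (m * y) := by
  rcases eq_or_ne m 0 with rfl | hm
  · simpa using convexOn_const 1 convex_univ
  · exact (strictConvexOn_exp_mul hm).convexOn

lemma convexOn_finset_sum {ι : Type*} {s : Finset ι} {f : ι → ℝ → ℝ}
    (h : ∀ i ∈ s, ConvexOn ℝ univ (f i)) : ConvexOn ℝ univ fun y => ∑ i ∈ s, f i y := by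
  simpa only [← Finset.sum_apply] using
    Finset.sum_induction f (ConvexOn ℝ univ) (fun _ _ => ConvexOn.add)
      (convexOn_const 0 convex_univ) h

theorem lt_zero_between_roots_of_single_negative_term {n k : ℕ} (hkn : k ≠ n) (c : ℝ)
    {s : Finset ℕ} {w : ℕ → ℝ} (hw : ∀ j ∈ s, 0 ≤ w j) {F : ℝ → ℝ}
    (hF : ∀ x, F x = x ^ n - c * x ^ k + ∑ j ∈ s, w j * x ^ j)
    {x₁ x₂ x : ℝ} (hx₁ : 0 < x₁) (h₁ : F x₁ = 0) (h₂ : F x₂ = 0) (hx : x ∈ Ioo x₁ x₂) :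
    F x < 0 := by
  set g : ℝ → ℝ := fun y =>
    exp ((n - k : ℝ) * y) + (-c + ∑ j ∈ s, w j * exp ((j - k : ℝ) * y))
  have hpow (t : ℝ) (ht : 0 < t) (j : ℕ) : t ^ k * exp ((j - k : ℝ) * log t) = t ^ j := by
    rw [sub_mul, exp_sub, exp_nat_mul, exp_nat_mul, exp_log ht]
    field_simp
  have hFg (t : ℝ) (ht : 0 < t) : F t = t ^ k * g (log t) := by
    simp only [hF, g, mul_add, Finset.mul_sum, hpow t ht, mul_left_comm (t ^ k) (w _)]
    ring
  have hg : StrictConvexOn ℝ univ g :=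
    (strictConvexOn_exp_mul (sub_ne_zero.2 (Nat.cast_injective.ne hkn.symm))).add_convexOn
      ((convexOn_const _ convex_univ).add
        (convexOn_finset_sum fun j hj => (convexOn_exp_mul _).smul (hw j hj)))
  have hroot (t : ℝ) (ht : 0 < t) (h : F t = 0) : g (log t) = 0 := by
    rw [hFg t ht] at h
    exact (mul_eq_zero.1 h).resolve_left (pow_pos ht k).ne'
  have hlog₁₂ := log_lt_log hx₁ (hx.1.trans hx.2)
  have hlog : log x ∈ openSegment ℝ (log x₁) (log x₂) := by
    rw [openSegment_eq_Ioo hlog₁₂]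
    exact ⟨log_lt_log hx₁ hx.1, log_lt_log (hx₁.trans hx.1) hx.2⟩
  have hneg := hg.lt_on_openSegment (mem_univ _) (mem_univ _) hlog₁₂.ne hlog
  rw [hroot x₁ hx₁ h₁, hroot x₂ (hx₁.trans (hx.1.trans hx.2)) h₂, max_self] at hneg
  rw [hFg x (hx₁.trans hx.1)]
  exact mul_neg_of_pos_of_neg (pow_pos (hx₁.trans hx.1) k) hneg

theorem pow_sub_le_of_root_of_single_negative_term {n k : ℕ} (hkn : k ≤ n) {c : ℝ}
    {s : Finset ℕ} {w : ℕ → ℝ} (hw : ∀ j ∈ s, 0 ≤ w j) {F : ℝ → ℝ}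
    (hF : ∀ x, F x = x ^ n - c * x ^ k + ∑ j ∈ s, w j * x ^ j) {x : ℝ} (hx : 0 < x)
    (h : F x = 0) : x ^ (n - k) ≤ c := by
  have hsum : 0 ≤ ∑ j ∈ s, w j * x ^ j :=
    sum_nonneg fun j hj => mul_nonneg (hw j hj) (by positivity)
  rw [hF] at h
  refine le_of_mul_le_mul_right ?_ (pow_pos hx k)
  rw [pow_sub_mul_pow x hkn]
  linarith

end Convexity

section ArgumentPrinciple

open Complex

lemma CircleIntegrable.multiset_sum {ι E : Type*} [NormedAddCommGroup E] {c : ℂ} {R : ℝ}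
    {s : Multiset ι} {f : ι → ℂ → E} (h : ∀ i ∈ s, CircleIntegrable (f i) c R) :
    CircleIntegrable (fun z => (s.map fun i => f i z).sum) c R := by
  induction s using Multiset.induction_on with
  | empty => simp
  | cons i s ih =>
    simp only [Multiset.map_cons, Multiset.sum_cons]
    exact (h i (Multiset.mem_cons_self i s)).add (ih fun j hj => h j (Multiset.mem_cons_of_mem hj))

lemma circleIntegral_inv_sub_of_lt_norm {ρ : ℂ} {R : ℝ} (hR : 0 ≤ R) (hρ : R < ‖ρ‖) :
    ∮ z in C(0, R), (z - ρ)⁻¹ = 0 := by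
  refine DiffContOnCl.circleIntegral_eq_zero hR <|
    ((differentiableOn_id.sub_const ρ).inv fun z hz => ?_).diffContOnCl_ball subset_rfl
  rw [sub_ne_zero]
  rintro rfl
  exact (mem_closedBall_zero_iff.1 hz).not_gt hρ

theorem circleIntegral_sum_inv_sub {R : ℝ} (hR : 0 < R) {s : Multiset ℂ}
    (hs : ∀ ρ ∈ s, ‖ρ‖ ≠ R) :
    ∮ z in C(0, R), (s.map fun ρ => (z - ρ)⁻¹).sum =
      2 * π * I * Multiset.card (s.filter (‖·‖ < R)) := by
  have hint (ρ : ℂ) (hρ : ‖ρ‖ ≠ R) : CircleIntegrable (fun z => (z - ρ)⁻¹) 0 R := by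
    simp [abs_of_pos hR, hρ]
  induction s using Multiset.induction_on with
  | empty => simp [circleIntegral]
  | cons ρ s ih =>
    have hρ := hs ρ (Multiset.mem_cons_self ρ s)
    have hs' : ∀ σ ∈ s, ‖σ‖ ≠ R := fun σ hσ => hs σ (Multiset.mem_cons_of_mem hσ)
    simp only [Multiset.map_cons, Multiset.sum_cons]
    rw [circleIntegral.integral_add (hint ρ hρ)
      (CircleIntegrable.multiset_sum fun σ hσ => hint σ (hs' σ hσ)), ih hs']
    rcases hρ.lt_or_gt with hlt | hgt
    · rw [circleIntegral.integral_sub_inv_of_mem_ball (mem_ball_zero_iff.2 hlt),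
        Multiset.filter_cons_of_pos (p := (‖·‖ < R)) s hlt, Multiset.card_cons]
      push_cast
      ring
    · rw [circleIntegral_inv_sub_of_lt_norm hR.le hgt,
        Multiset.filter_cons_of_neg (p := (‖·‖ < R)) s hgt.not_gt, zero_add]

theorem circleIntegral_derivative_div_eq {R : ℝ} (hR : 0 < R) {p : ℂ[X]}
    (hsphere : ∀ z, ‖z‖ = R → p.eval z ≠ 0) :
    ∮ z in C(0, R), (derivative p).eval z / p.eval z =
      2 * π * I * Multiset.card (p.roots.filter (‖·‖ < R)) := by
  have hp : p ≠ 0 := fun h => hsphere R (by simp [hR.le]) (by simp [h])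
  rw [← circleIntegral_sum_inv_sub hR fun ρ hρ => ?_]
  · refine circleIntegral.integral_congr hR.le fun z hz => ?_
    rw [(IsAlgClosed.splits p).eval_derivative_div_eval_of_ne_zero
      (hsphere z (mem_sphere_zero_iff_norm.1 hz))]
    simp only [one_div]
  · rintro rfl
    exact hsphere ρ rfl ((mem_roots hp).1 hρ)

/-- The count is `(2πi)⁻¹ ∮ p'/p`, a continuous integer-valued function of `t`. -/
theorem card_roots_filter_norm_lt_eq_of_continuous {T : Type*} [TopologicalSpace T]
    [PreconnectedSpace T] {p : T → ℂ[X]} (hp : Continuous fun x : T × ℂ => (p x.1).eval x.2)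
    (hp' : Continuous fun x : T × ℂ => (derivative (p x.1)).eval x.2) {R : ℝ} (hR : 0 < R)
    (hsphere : ∀ t z, ‖z‖ = R → (p t).eval z ≠ 0) (s t : T) :
    Multiset.card ((p s).roots.filter (‖·‖ < R)) =
      Multiset.card ((p t).roots.filter (‖·‖ < R)) := by
  set N : T → ℤ := fun t => Multiset.card ((p t).roots.filter (‖·‖ < R))
  have hcircle : Continuous (Function.uncurry fun t θ =>
      deriv (circleMap 0 R) θ • ((derivative (p t)).eval (circleMap 0 R θ) /
        (p t).eval (circleMap 0 R θ))) := by
    have hz : Continuous fun x : T × ℝ => (x.1, circleMap 0 R x.2) :=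
      continuous_fst.prodMk ((continuous_circleMap 0 R).comp continuous_snd)
    simp only [deriv_circleMap]
    refine (by fun_prop : Continuous fun x : T × ℝ => circleMap 0 R x.2 * I).smul
      ((hp'.comp hz).div (hp.comp hz) fun x => hsphere _ _ ?_)
    simp [hR.le]
  have hI : Continuous fun t => ∮ z in C(0, R), (derivative (p t)).eval z / (p t).eval z :=
    intervalIntegral.continuous_parametric_intervalIntegral_of_continuous' hcircle 0 (2 * π)
  have hN : Continuous N := by
    have hcount : ((↑) ∘ N : T → ℂ) =
        fun t => (2 * π * I)⁻¹ * ∮ z in C(0, R), (derivative (p t)).eval z / (p t).eval z := by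
      funext t
      rw [circleIntegral_derivative_div_eq hR (hsphere t),
        inv_mul_cancel_left₀ (by simp [Real.pi_ne_zero, I_ne_zero])]
      simp [N]
    rw [Complex.isClosedEmbedding_intCast.isEmbedding.continuous_iff, hcount]
    exact continuous_const.mul hI
  simpa [N] using PreconnectedSpace.constant inferInstance hN (x := s) (y := t)

lemma continuous_eval_eval_C (D : ℂ[X][X]) :
    Continuous fun x : ℂ × ℂ => (D.eval (C x.1)).eval x.2 := by
  simp only [eval_eq_sum_range (p := D), eval_finsetSum, eval_mul, eval_pow, eval_C]
  fun_prop

lemma continuous_eval_derivative_eval_C (D : ℂ[X][X]) :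
    Continuous fun x : ℂ × ℂ => (derivative (D.eval (C x.1))).eval x.2 := by
  simp only [eval_eq_sum_range (p := D), derivative_sum, derivative_mul, ← C_pow, derivative_C,
    mul_zero, add_zero, eval_finsetSum, eval_mul, eval_C]
  fun_prop

theorem card_roots_filter_norm_lt_eval_C_eq {D : ℂ[X][X]} {S : Set ℂ} (hS : IsPreconnected S)
    {R : ℝ} (hR : 0 < R) (hsphere : ∀ t ∈ S, ∀ z, ‖z‖ = R → (D.eval (C t)).eval z ≠ 0)
    {s t : ℂ} (hs : s ∈ S) (ht : t ∈ S) :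
    Multiset.card ((D.eval (C s)).roots.filter (‖·‖ < R)) =
      Multiset.card ((D.eval (C t)).roots.filter (‖·‖ < R)) := by
  have := isPreconnected_iff_preconnectedSpace.1 hS
  have hval : Continuous fun x : S × ℂ => ((x.1 : ℂ), x.2) :=
    continuous_subtype_val.prodMap continuous_id
  exact card_roots_filter_norm_lt_eq_of_continuous (p := fun t : S => D.eval (C (t : ℂ)))
    ((continuous_eval_eval_C D).comp hval) ((continuous_eval_derivative_eval_C D).comp hval) hR
    (fun t z hz => hsphere t t.2 z hz) ⟨s, hs⟩ ⟨t, ht⟩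

theorem card_roots_filter_norm_lt_X_pow_mul {q : ℂ[X]} {R : ℝ} (hR : 0 < R)
    (hroots : ∀ z, ‖z‖ < R → q.eval z ≠ 0) (j : ℕ) :
    Multiset.card ((X ^ j * q).roots.filter (‖·‖ < R)) = j := by
  have hq : q ≠ 0 := fun h => hroots 0 (by simpa using hR) (by simp [h])
  rw [roots_mul (mul_ne_zero (pow_ne_zero j X_ne_zero) hq), roots_X_pow, Multiset.filter_add,
    Multiset.filter_eq_self.2 fun z hz => ?_, Multiset.filter_eq_nil.2 fun z hz => ?_]
  · simp
  · exact fun h => hroots z h ((mem_roots hq).1 hz)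
  · rw [Multiset.nsmul_singleton, Multiset.mem_replicate] at hz
    simp [hz.2, hR]

end ArgumentPrinciple

section MatrixPolynomial

theorem isUnit_add_of_norm_mul_lt_one {R : Type*} [NormedRing R] [HasSummableGeomSeries R]
    {a b r : R} (hab : a * b = 1) (hba : b * a = 1) (h : ‖b‖ * ‖r‖ < 1) : IsUnit (a + r) := by
  have hbr : IsUnit (1 - -(b * r)) :=
    isUnit_one_sub_of_norm_lt_one ((norm_neg (b * r)).trans_lt ((norm_mul_le b r).trans_lt h))
  have : a + r = a * (1 - -(b * r)) := by
    rw [sub_neg_eq_add, mul_add, mul_one, ← mul_assoc, hab, one_mul]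
  exact this ▸ IsUnit.mul ⟨⟨a, b, hab, hba⟩, rfl⟩ hbr

variable {m : Type*} [DecidableEq m]

def pelletPencil (A : ℕ → Matrix m m ℂ) (n k : ℕ) (t z : ℂ) : Matrix m m ℂ :=
  z ^ n • 1 + z ^ k • A k + t • ∑ j ∈ (range n).erase k, z ^ j • A j

lemma pelletPencil_one (A : ℕ → Matrix m m ℂ) {n k : ℕ} (hkn : k < n) (z : ℂ) :
    pelletPencil A n k 1 z = z ^ n • 1 + ∑ j ∈ range n, z ^ j • A j := by
  rw [pelletPencil, one_smul, add_assoc, add_sum_erase _ (fun j => z ^ j • A j) (mem_range.2 hkn)]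

variable [Fintype m]

lemma Matrix.l2_opNorm_one_le : ‖(1 : Matrix m m ℂ)‖ ≤ 1 := by
  rw [Matrix.cstar_norm_def, map_one]
  exact ContinuousLinearMap.norm_id_le

lemma specNorm_eq_norm {d : ℕ} (M : Matrix (Fin d) (Fin d) ℂ) : specNorm M = ‖M‖ := rfl

theorem isUnit_add_smul_one {M : Matrix m m ℂ} (hM : IsUnit M) {w : ℂ} (hw : ‖w‖ < ‖M⁻¹‖⁻¹) :
    IsUnit (M + w • 1) := by
  have hdet := (Matrix.isUnit_iff_isUnit_det _).1 hM
  have hpos : 0 < ‖M⁻¹‖ := inv_pos.1 ((norm_nonneg w).trans_lt hw)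
  refine isUnit_add_of_norm_mul_lt_one (Matrix.mul_nonsing_inv _ hdet)
    (Matrix.nonsing_inv_mul _ hdet) ?_
  calc ‖M⁻¹‖ * ‖w • (1 : Matrix m m ℂ)‖ ≤ ‖M⁻¹‖ * ‖w‖ := by
        rw [norm_smul]
        gcongr
        exact mul_le_of_le_one_right (norm_nonneg w) Matrix.l2_opNorm_one_le
    _ < ‖M⁻¹‖ * ‖M⁻¹‖⁻¹ := by gcongr
    _ = 1 := mul_inv_cancel₀ hpos.ne'

theorem isUnit_pelletPencil {A : ℕ → Matrix m m ℂ} {n k : ℕ} (hAk : IsUnit (A k)) {t z : ℂ}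
    (h : ‖z‖ ^ n + ‖t‖ * ∑ j ∈ (range n).erase k, ‖A j‖ * ‖z‖ ^ j < ‖(A k)⁻¹‖⁻¹ * ‖z‖ ^ k) :
    IsUnit (pelletPencil A n k t z) := by
  set S := ‖z‖ ^ n + ‖t‖ * ∑ j ∈ (range n).erase k, ‖A j‖ * ‖z‖ ^ j
  have hpos : 0 < ‖(A k)⁻¹‖⁻¹ * ‖z‖ ^ k := (by positivity : 0 ≤ S).trans_lt h
  have hzk : 0 < ‖z‖ ^ k := pos_of_mul_pos_right hpos (by positivity)
  have hs : 0 < ‖(A k)⁻¹‖ := inv_pos.1 (pos_of_mul_pos_left hpos hzk.le)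
  have hzk' : z ^ k ≠ 0 := norm_pos_iff.1 (by rwa [norm_pow])
  have hdet := (Matrix.isUnit_iff_isUnit_det _).1 hAk
  set r := z ^ n • (1 : Matrix m m ℂ) + t • ∑ j ∈ (range n).erase k, z ^ j • A j
  have hr : ‖r‖ ≤ S := by
    refine (norm_add_le _ _).trans (add_le_add ?_ ?_)
    · rw [norm_smul, norm_pow]
      exact mul_le_of_le_one_right (by positivity) Matrix.l2_opNorm_one_le
    · rw [norm_smul]
      refine mul_le_mul_of_nonneg_left ((norm_sum_le _ _).trans (sum_le_sum fun j _ => ?_))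
        (norm_nonneg t)
      rw [norm_smul, norm_pow, mul_comm]
  have hsmall : ‖(z ^ k)⁻¹ • (A k)⁻¹‖ * ‖r‖ < 1 := by
    rw [norm_smul, norm_inv, norm_pow]
    calc (‖z‖ ^ k)⁻¹ * ‖(A k)⁻¹‖ * ‖r‖ ≤ (‖z‖ ^ k)⁻¹ * ‖(A k)⁻¹‖ * S := by gcongr
      _ < (‖z‖ ^ k)⁻¹ * ‖(A k)⁻¹‖ * (‖(A k)⁻¹‖⁻¹ * ‖z‖ ^ k) := by gcongr
      _ = 1 := by field_simp
  have hsplit : pelletPencil A n k t z = z ^ k • A k + r := by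
    simp only [pelletPencil, r]
    abel
  rw [hsplit]
  refine isUnit_add_of_norm_mul_lt_one ?_ ?_ hsmall
  · rw [smul_mul_smul_comm, mul_inv_cancel₀ hzk', Matrix.mul_nonsing_inv _ hdet, one_smul]
  · rw [smul_mul_smul_comm, inv_mul_cancel₀ hzk', Matrix.nonsing_inv_mul _ hdet, one_smul]

/-- `det (pelletPencil A n k t z)` as a polynomial in `t` whose coefficients are polynomials
in `z`. -/
noncomputable def pelletHomotopy (A : ℕ → Matrix m m ℂ) (n k : ℕ) : ℂ[X][X] :=
  (((X : ℂ[X]) ^ n • 1 + (X : ℂ[X]) ^ k • (A k).map C : Matrix m m ℂ[X]).map C +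
    (X : ℂ[X][X]) •
      (∑ j ∈ (range n).erase k, (X : ℂ[X]) ^ j • (A j).map C : Matrix m m ℂ[X]).map C).det

lemma eval_eval_C_pelletHomotopy (A : ℕ → Matrix m m ℂ) (n k : ℕ) (t z : ℂ) :
    ((pelletHomotopy A n k).eval (C t)).eval z = (pelletPencil A n k t z).det := by
  rw [pelletHomotopy, ← coe_evalRingHom (C t), RingHom.map_det, ← coe_evalRingHom z,
    RingHom.map_det]
  congr 1
  ext i j
  simp [pelletPencil, Matrix.sum_apply, Matrix.one_apply, apply_ite, eval_finsetSum,
    mul_comm (A _ i j)]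

lemma pelletHomotopy_eval_zero (A : ℕ → Matrix m m ℂ) {n k : ℕ} (hkn : k ≤ n) :
    (pelletHomotopy A n k).eval (C 0) = (X : ℂ[X]) ^ (k * Fintype.card m) *
      ((X : ℂ[X]) ^ (n - k) • (1 : Matrix m m ℂ[X]) + (A k).map C).det := by
  rw [pelletHomotopy, ← coe_evalRingHom, RingHom.map_det]
  have : (X : ℂ[X]) ^ n • (1 : Matrix m m ℂ[X]) + (X : ℂ[X]) ^ k • (A k).map C =
      (X : ℂ[X]) ^ k • ((X : ℂ[X]) ^ (n - k) • 1 + (A k).map C) := by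
    rw [smul_add, smul_smul, ← pow_add, Nat.add_sub_cancel' hkn]
  rw [pow_mul, ← Matrix.det_smul, ← this]
  congr 1
  ext i j
  simp

theorem eval_eval_C_pelletHomotopy_ne_zero {A : ℕ → Matrix m m ℂ} {n k : ℕ}
    (hAk : IsUnit (A k)) {t z : ℂ} (ht : ‖t‖ ≤ 1)
    (hz : ‖z‖ ^ n - ‖(A k)⁻¹‖⁻¹ * ‖z‖ ^ k + ∑ j ∈ (range n).erase k, ‖A j‖ * ‖z‖ ^ j < 0) :
    ((pelletHomotopy A n k).eval (C t)).eval z ≠ 0 := by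
  have hscale : ‖t‖ * ∑ j ∈ (range n).erase k, ‖A j‖ * ‖z‖ ^ j ≤
      ∑ j ∈ (range n).erase k, ‖A j‖ * ‖z‖ ^ j := mul_le_of_le_one_left (by positivity) ht
  rw [eval_eval_C_pelletHomotopy]
  exact ((Matrix.isUnit_iff_isUnit_det _).1 (isUnit_pelletPencil hAk (by linarith))).ne_zero

theorem card_roots_filter_pelletHomotopy_zero {A : ℕ → Matrix m m ℂ} {n k : ℕ} (hkn : k < n)
    (hAk : IsUnit (A k)) {r : ℝ} (hr : 0 < r) (hrk : r ^ (n - k) ≤ ‖(A k)⁻¹‖⁻¹) :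
    Multiset.card (((pelletHomotopy A n k).eval (C 0)).roots.filter (‖·‖ < r)) =
      k * Fintype.card m := by
  rw [pelletHomotopy_eval_zero A hkn.le]
  refine card_roots_filter_norm_lt_X_pow_mul hr (fun z hz => ?_) _
  have hunit := isUnit_add_smul_one hAk (w := z ^ (n - k)) <| by
    rw [norm_pow]
    exact (pow_lt_pow_left₀ hz (norm_nonneg z) (by omega)).trans_le hrk
  rw [← coe_evalRingHom, RingHom.map_det]
  convert ((Matrix.isUnit_iff_isUnit_det _).1 hunit).ne_zero using 2
  ext i j
  simp [Matrix.one_apply, apply_ite (eval z), add_comm]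

end MatrixPolynomial

theorem pellet_matrix_general
    (d n : ℕ) (hn : 2 ≤ n) (A : ℕ → Matrix (Fin d) (Fin d) ℂ)
    (k : ℕ) (hk2 : k ≤ n - 1) (hAk : IsUnit (A k))
    (f : ℝ → ℝ)
    (hf : ∀ x : ℝ, f x = x ^ n - (specNorm ((A k)⁻¹))⁻¹ * x ^ k
        + ∑ j ∈ (Finset.range n).erase k, specNorm (A j) * x ^ j)
    (x1 x2 : ℝ) (hx1 : 0 < x1) (hx12 : x1 < x2) (hfx1 : f x1 = 0) (hfx2 : f x2 = 0)
    (Q : Polynomial ℂ)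
    (hQ : ∀ z : ℂ, Q.eval z = Matrix.det (z ^ n • (1 : Matrix (Fin d) (Fin d) ℂ)
        + ∑ j ∈ Finset.range n, z ^ j • A j)) :
    rcount Q (fun z => ‖z‖ ≤ x1) = k * d ∧
    ∀ z : ℂ, Q.eval z = 0 → ¬ (x1 < ‖z‖ ∧ ‖z‖ < x2) := by
  have hkn : k < n := by omega
  simp only [specNorm_eq_norm] at hf
  have hw (j : ℕ) (_ : j ∈ (range n).erase k) : 0 ≤ ‖A j‖ := norm_nonneg (A j)
  set D := pelletHomotopy A n k
  have hfree (t : ℂ) (ht : ‖t‖ ≤ 1) (z : ℂ) (hz : ‖z‖ ∈ Ioo x1 x2) :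
      (D.eval (C t)).eval z ≠ 0 :=
    eval_eval_C_pelletHomotopy_ne_zero hAk ht <| by
      rw [← hf]
      exact lt_zero_between_roots_of_single_negative_term hkn.ne _ hw hf hx1 hfx1 hfx2 hz
  have hQD : Q = D.eval (C 1) := Polynomial.funext fun z => by
    rw [hQ, eval_eval_C_pelletHomotopy, pelletPencil_one A hkn]
  refine ⟨?_, fun z hz h => hfree 1 (by simp) z h (hQD ▸ hz)⟩
  obtain ⟨r, hr⟩ := Set.nonempty_Ioo.2 hx12
  have hrk : r ^ (n - k) ≤ ‖(A k)⁻¹‖⁻¹ :=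
    (pow_le_pow_left₀ (hx1.trans hr.1).le hr.2.le _).trans
      (pow_sub_le_of_root_of_single_negative_term hkn.le hw hf (hx1.trans hx12) hfx2)
  calc rcount Q (fun z => ‖z‖ ≤ x1)
      = Multiset.card ((D.eval (C 1)).roots.filter (‖·‖ < r)) := by
        rw [rcount, hQD]
        congr 1
        refine Multiset.filter_congr fun z hz => ⟨fun h => h.trans_lt hr.1, fun h => ?_⟩
        exact not_lt.1 fun h' => hfree 1 (by simp) z ⟨h', h.trans hr.2⟩ (mem_roots'.1 hz).2
    _ = Multiset.card ((D.eval (C 0)).roots.filter (‖·‖ < r)) :=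
        card_roots_filter_norm_lt_eval_C_eq (convex_closedBall (0 : ℂ) 1).isPreconnected
          (hx1.trans hr.1) (fun t ht z hz => hfree t (mem_closedBall_zero_iff.1 ht) z (hz ▸ hr))
          (by simp) (by simp)
    _ = k * d := by
        rw [card_roots_filter_pelletHomotopy_zero hkn hAk (hx1.trans hr.1) hrk, Fintype.card_fin]

theorem pellet_matrix
    (d n : ℕ) (hn : 2 ≤ n) (A : ℕ → Matrix (Fin d) (Fin d) ℂ) (hA0 : A 0 ≠ 0)
    (k : ℕ) (hk1 : 1 ≤ k) (hk2 : k ≤ n - 1) (hAk : IsUnit (A k))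
    (f : ℝ → ℝ)
    (hf : ∀ x : ℝ, f x = x ^ n - (specNorm ((A k)⁻¹))⁻¹ * x ^ k
        + ∑ j ∈ (Finset.range n).erase k, specNorm (A j) * x ^ j)
    (x1 x2 : ℝ) (hx1 : 0 < x1) (hx12 : x1 < x2) (hfx1 : f x1 = 0) (hfx2 : f x2 = 0)
    (Q : Polynomial ℂ)
    (hQ : ∀ z : ℂ, Q.eval z = Matrix.det (z ^ n • (1 : Matrix (Fin d) (Fin d) ℂ)
        + ∑ j ∈ Finset.range n, z ^ j • A j)) :
    rcount Q (fun z => ‖z‖ ≤ x1) = k * d ∧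
    ∀ z : ℂ, Q.eval z = 0 → ¬ (x1 < ‖z‖ ∧ ‖z‖ < x2) :=
  pellet_matrix_general d n hn A k hk2 hAk f hf x1 x2 hx1 hx12 hfx1 hfx2 Q hQ
end
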